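/- arXiv:math/0409274 — 7 statements merged into one kernel-verified Lean document; each statement's English description precedes it below -/
import Mathlib

section
/- The series H(s,t) = Σ_{n≥0} Σ_{σ ∈ NCP_n} ∫_{t ≤ t_1 ≤ ⋯ ≤ t_{2n} ≤ s} Π_{i ∈ cr(σ)} k(t_i, t_{σ(i)}) dt_1⋯dt_{2n} satisfies H(s,t) ≤ exp(2 ∫_t^s k(u,u)^{1/2} du), for any continuous nonnegative kernel k with k(t,s)² ≤ k(t,t)k(s,s). -/
open MeasureTheory Finset
open scoped Classical

/-- `σ` is a non-crossing pairing: an involution without fixed points such that the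
crossing situation `i < j < σ i < σ j` never occurs. -/
def IsNCPairing {m : ℕ} (σ : Equiv.Perm (Fin m)) : Prop :=
  (∀ i, σ (σ i) = i) ∧ (∀ i, σ i ≠ i) ∧ ∀ i j : Fin m, i < j → j < σ i → ¬ σ i < σ j

/-- The `n`-th term of the pairing series:
`Σ_{σ ∈ NCP_n} ∫_{t ≤ t_1 ≤ ⋯ ≤ t_{2n} ≤ s} Π_{i ∈ cr(σ)} k(t_i, t_{σ(i)}) dt`. -/
noncomputable def pairingTerm (k : ℝ → ℝ → ℝ) (n : ℕ) (t s : ℝ) : ℝ :=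
  ∑ σ ∈ Finset.univ.filter (fun σ : Equiv.Perm (Fin (2 * n)) => IsNCPairing σ),
    ∫ x in {x : Fin (2 * n) → ℝ | Monotone x ∧ ∀ i, x i ∈ Set.Icc t s},
      ∏ i ∈ Finset.univ.filter (fun i => i < σ i), k (x i) (x (σ i))

/-- The non-crossing pairing series `H(s,t)`. -/
noncomputable def kraichnanSeries (k : ℝ → ℝ → ℝ) (s t : ℝ) : ℝ :=
  ∑' n : ℕ, pairingTerm k n t s

/-!
With `g u = √k(u,u)`, Cauchy–Schwarz gives `k(a,b) ≤ g a * g b`; since a pairing uses every index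
exactly once, each pairing's integrand is at most `∏ i, g (x i)`, whose integral over the ordered
simplex is `K ^ (2n) / (2n)!` with `K = ∫_t^s g`. A non-crossing pairing is determined by its set of
openers `{i | i < σ i}`, so there are at most `2 ^ (2n)` of them, and the series is dominated by
`∑ (2K) ^ (2n) / (2n)! = cosh (2K) ≤ exp (2K)`.
-/

open scoped Nat

namespace IsNCPairing

variable {m : ℕ} {σ τ : Equiv.Perm (Fin m)}

theorem apply_lt_of_not_lt (hσ : IsNCPairing σ) {i : Fin m} (hi : ¬ i < σ i) : σ i < i :=
  lt_of_le_of_ne (not_lt.mp hi) (hσ.2.1 i)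

/-- The witness is `c = τ (σ i)`; non-crossing for `τ` forces `i < c`. -/
theorem exists_gt_of_apply_lt_apply (hσ : IsNCPairing σ) (hτ : IsNCPairing τ)
    (hop : ∀ j, j < σ j ↔ j < τ j) {i : Fin m} (hi : i < σ i) (hlt : σ i < τ i) :
    ∃ c, i < c ∧ c < σ c ∧ σ c ≠ τ c := by
  have hclose : ¬ σ i < τ (σ i) := by
    rw [← hop, hσ.1]
    exact hi.le.not_gt
  obtain ⟨c, hc⟩ : ∃ c, τ c = σ i := ⟨τ (σ i), hτ.1 _⟩
  have hca : c < σ i := by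
    rw [show c = τ (σ i) by rw [← hc, hτ.1]]
    exact hτ.apply_lt_of_not_lt hclose
  have hci : c ≠ i := by
    rintro rfl
    exact hlt.ne' hc
  have hic : i < c := (lt_or_gt_of_ne hci).resolve_left fun h => hτ.2.2 c i h (hc ▸ hi) (hc ▸ hlt)
  refine ⟨c, hic, (hop c).2 (hc ▸ hca), fun h => hci (σ.injective (h.trans hc))⟩

theorem eq_of_forall_lt_apply_iff (hσ : IsNCPairing σ) (hτ : IsNCPairing τ)
    (hop : ∀ j, j < σ j ↔ j < τ j) : σ = τ := by
  have hopeners : ∀ i, i < σ i → σ i = τ i := by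
    by_contra! h
    obtain ⟨i₀, hi₀⟩ := h
    obtain ⟨i, hi, hmax⟩ := (Finset.univ.filter fun i => i < σ i ∧ σ i ≠ τ i).exists_max_image id
      ⟨i₀, by simpa using hi₀⟩
    simp only [Finset.mem_filter, Finset.mem_univ, true_and, id] at hi hmax
    obtain ⟨c, hic, hc, hne⟩ : ∃ c, i < c ∧ c < σ c ∧ σ c ≠ τ c := by
      rcases lt_or_gt_of_ne hi.2 with hlt | hgt
      · exact exists_gt_of_apply_lt_apply hσ hτ hop hi.1 hlt
      · obtain ⟨c, hic, hc, hne⟩ :=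
          exists_gt_of_apply_lt_apply hτ hσ (fun j => (hop j).symm) ((hop i).1 hi.1) hgt
        exact ⟨c, hic, (hop c).2 hc, hne.symm⟩
    exact (hmax c ⟨hc, hne⟩).not_gt hic
  refine Equiv.ext fun i => ?_
  by_cases hi : i < σ i
  · exact hopeners i hi
  · have h := hopeners (σ i) (by rw [hσ.1]; exact hσ.apply_lt_of_not_lt hi)
    rw [hσ.1] at h
    calc σ i = τ (τ (σ i)) := (hτ.1 _).symm
      _ = τ i := by rw [← h]

end IsNCPairing

theorem card_isNCPairing_le (m : ℕ) :
    (Finset.univ.filter fun σ : Equiv.Perm (Fin m) => IsNCPairing σ).card ≤ 2 ^ m :=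
  calc (Finset.univ.filter fun σ : Equiv.Perm (Fin m) => IsNCPairing σ).card
      ≤ (Finset.univ : Finset (Finset (Fin m))).card := by
        refine Finset.card_le_card_of_injOn (fun σ => Finset.univ.filter fun i => i < σ i)
          (fun _ _ => Finset.mem_univ _) fun σ hσ τ hτ h => ?_
        simp only [Finset.coe_filter, Finset.mem_univ, true_and, Set.mem_ofPred_eq] at hσ hτ
        exact hσ.eq_of_forall_lt_apply_iff hτ fun j => by simpa using Finset.ext_iff.mp h j
    _ = 2 ^ m := by simp

theorem prod_filter_lt_apply_mul_apply_eq_prod {α M : Type*} [Fintype α] [LinearOrder α]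
    [CommMonoid M] {σ : Equiv.Perm α} (hinv : ∀ i, σ (σ i) = i) (hfix : ∀ i, σ i ≠ i)
    (v : α → M) :
    ∏ i ∈ Finset.univ.filter (fun i => i < σ i), v i * v (σ i) = ∏ i, v i := by
  rw [Finset.prod_mul_distrib,
    ← Finset.prod_filter_mul_prod_filter_not Finset.univ (fun i => i < σ i)]
  congr 1
  refine Finset.prod_nbij' σ σ (fun i hi => ?_) (fun i hi => ?_) (fun i _ => hinv i)
    (fun i _ => hinv i) fun _ _ => rfl
  · simp only [Finset.mem_filter, Finset.mem_univ, true_and, hinv] at hi ⊢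
    exact hi.le.not_gt
  · simp only [Finset.mem_filter, Finset.mem_univ, true_and, hinv] at hi ⊢
    exact lt_of_le_of_ne (not_lt.mp hi) (hfix i)

def orderedSimplex (m : ℕ) (t u : ℝ) : Set (Fin m → ℝ) :=
  {x | Monotone x ∧ ∀ i, x i ∈ Set.Icc t u}

theorem isClosed_orderedSimplex (m : ℕ) (t u : ℝ) : IsClosed (orderedSimplex m t u) := by
  rw [orderedSimplex, Set.ofPred_and, Set.ofPred_forall]
  exact isClosed_monotone.inter <|
    isClosed_iInter fun i => isClosed_Icc.preimage (continuous_apply i)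

theorem isCompact_orderedSimplex (m : ℕ) (t u : ℝ) : IsCompact (orderedSimplex m t u) :=
  (isCompact_Icc (a := fun _ => t) (b := fun _ => u)).of_isClosed_subset
    (isClosed_orderedSimplex m t u) fun _ hx => ⟨fun i => (hx.2 i).1, fun i => (hx.2 i).2⟩

theorem measurableSet_orderedSimplex (m : ℕ) (t u : ℝ) : MeasurableSet (orderedSimplex m t u) :=
  (isCompact_orderedSimplex m t u).isClosed.measurableSet

theorem orderedSimplex_zero (t u : ℝ) : orderedSimplex 0 t u = Set.univ :=
  Set.eq_univ_of_forall fun x => ⟨Subsingleton.monotone x, finZeroElim⟩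

theorem mem_orderedSimplex_succ {m : ℕ} {t u : ℝ} {x : Fin (m + 1) → ℝ} :
    x ∈ orderedSimplex (m + 1) t u ↔
      x (Fin.last m) ∈ Set.Icc t u ∧ Fin.init x ∈ orderedSimplex m t (x (Fin.last m)) := by
  constructor
  · rintro ⟨hmono, hx⟩
    exact ⟨hx _, fun a b hab => hmono (Fin.castSucc_le_castSucc_iff.mpr hab),
      fun j => ⟨(hx _).1, hmono (Fin.le_last _)⟩⟩
  · rintro ⟨hlast, hmono, hx⟩
    refine ⟨fun a b hab => ?_, Fin.lastCases hlast fun i => ⟨(hx i).1, (hx i).2.trans hlast.2⟩⟩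
    induction b using Fin.lastCases with
    | last => exact a.lastCases le_rfl fun i => (hx i).2
    | cast b =>
      induction a using Fin.lastCases with
      | last => exact absurd hab (Fin.castSucc_lt_last b).not_ge
      | cast a => exact hmono (Fin.castSucc_le_castSucc_iff.mp hab)

theorem setIntegral_orderedSimplex_succ {g : ℝ → ℝ} (hg : Continuous g) {t u : ℝ} (htu : t ≤ u)
    (m : ℕ) :
    ∫ x in orderedSimplex (m + 1) t u, ∏ i, g (x i)
      = ∫ y in t..u, g y * ∫ x in orderedSimplex m t y, ∏ i, g (x i) := by
  let e := MeasurableEquiv.piFinSuccAbove (fun _ : Fin (m + 1) => ℝ) (Fin.last m)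
  have he : ∀ x, e x = (x (Fin.last m), Fin.init x) := fun x => by
    ext j
    · rfl
    · simp [e, Fin.init]
  let B : Set (ℝ × (Fin m → ℝ)) := {p | p.1 ∈ Set.Icc t u ∧ p.2 ∈ orderedSimplex m t p.1}
  let H : ℝ × (Fin m → ℝ) → ℝ := fun p => g p.1 * ∏ i, g (p.2 i)
  have hpre : e ⁻¹' B = orderedSimplex (m + 1) t u := by
    ext x
    simp only [Set.mem_preimage, he, B]
    exact mem_orderedSimplex_succ.symm
  have hHe : ∀ x, H (e x) = ∏ i, g (x i) := fun x => by
    simp only [H, he, Fin.prod_univ_castSucc, Fin.init]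
    ring
  have hmp : MeasurePreserving e :=
    volume_preserving_piFinSuccAbove (fun _ : Fin (m + 1) => ℝ) (Fin.last m)
  have hB : MeasurableSet B :=
    e.measurableSet_preimage.mp (hpre ▸ measurableSet_orderedSimplex _ _ _)
  have hint : IntegrableOn H B := by
    rw [← hmp.integrableOn_comp_preimage e.measurableEmbedding, hpre, Function.comp_def]
    simp only [hHe]
    exact (continuous_finsetProd _ fun i _ => hg.comp (continuous_apply i)).continuousOn
      |>.integrableOn_compact (isCompact_orderedSimplex _ _ _)
  have hslice : ∀ y, ∫ x, B.indicator H (y, x)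
      = (Set.Icc t u).indicator (fun y => g y * ∫ x in orderedSimplex m t y, ∏ i, g (x i)) y := by
    intro y
    by_cases hy : y ∈ Set.Icc t u
    · rw [Set.indicator_of_mem hy, ← integral_indicator (measurableSet_orderedSimplex _ _ _),
        ← integral_const_mul]
      congr 1 with x
      by_cases hx : x ∈ orderedSimplex m t y
      · rw [Set.indicator_of_mem (show (y, x) ∈ B from ⟨hy, hx⟩), Set.indicator_of_mem hx]
      · rw [Set.indicator_of_notMem (fun h => hx h.2), Set.indicator_of_notMem hx, mul_zero]
    · have hzero : ∀ x, B.indicator H (y, x) = 0 := fun x =>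
        Set.indicator_of_notMem (fun h => hy h.1) _
      simp only [hzero, integral_zero, Set.indicator_of_notMem hy]
  calc ∫ x in orderedSimplex (m + 1) t u, ∏ i, g (x i)
      = ∫ x in e ⁻¹' B, H (e x) := by simp only [hpre, hHe]
    _ = ∫ p in B, H p := hmp.setIntegral_preimage_emb e.measurableEmbedding H B
    _ = ∫ y, ∫ x, B.indicator H (y, x) := by
      rw [← integral_indicator hB, Measure.volume_eq_prod,
        integral_prod _ ((integrable_indicator_iff hB).2 hint)]
    _ = ∫ y in t..u, g y * ∫ x in orderedSimplex m t y, ∏ i, g (x i) := by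
      rw [intervalIntegral.integral_of_le htu, ← integral_Icc_eq_integral_Ioc,
        ← integral_indicator measurableSet_Icc]
      simp only [hslice]

theorem setIntegral_orderedSimplex_prod {g : ℝ → ℝ} (hg : Continuous g) {t u : ℝ} (htu : t ≤ u)
    (m : ℕ) : ∫ x in orderedSimplex m t u, ∏ i, g (x i) = (∫ y in t..u, g y) ^ m / m ! := by
  induction m generalizing u with
  | zero => simp [orderedSimplex_zero, Measure.real, volume_pi]
  | succ m ih =>
    let G := fun v => ∫ y in t..v, g y
    have hG : ∀ v, HasDerivAt G (g v) v := fun v => (hg.integral_hasStrictDerivAt t v).hasDerivAt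
    rw [setIntegral_orderedSimplex_succ hg htu,
      intervalIntegral.integral_congr (g := fun y => ((fun z : ℝ => z ^ m / m !) ∘ G) y * g y)
        fun y hy => by rw [ih (Set.uIcc_of_le htu ▸ hy).1, mul_comm]; rfl,
      intervalIntegral.integral_comp_mul_deriv (fun y _ => hG y) hg.continuousOn (by fun_prop)]
    simp [G, intervalIntegral.integral_div, integral_pow, Nat.factorial_succ]
    field_simp

theorem tsum_le_cosh_of_le {a : ℕ → ℝ} {c : ℝ} (ha : ∀ n, 0 ≤ a n)
    (hac : ∀ n, a n ≤ c ^ (2 * n) / (2 * n)!) : ∑' n, a n ≤ Real.cosh c := by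
  have hcosh := Real.hasSum_cosh c
  rw [← hcosh.tsum_eq]
  exact (hcosh.summable.of_nonneg_of_le ha hac).tsum_le_tsum hac hcosh.summable

theorem Real.cosh_le_exp_of_nonneg {x : ℝ} (hx : 0 ≤ x) : Real.cosh x ≤ Real.exp x := by
  rw [Real.cosh_eq]
  linarith [Real.exp_le_exp.2 (neg_le_self hx)]

theorem pairingTerm_nonneg {k : ℝ → ℝ → ℝ} (hnn : ∀ x y, 0 ≤ k x y) (n : ℕ) (t s : ℝ) :
    0 ≤ pairingTerm k n t s :=
  Finset.sum_nonneg fun _ _ => setIntegral_nonneg (measurableSet_orderedSimplex _ t s)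
    fun _ _ => Finset.prod_nonneg fun _ _ => hnn _ _

theorem pairingTerm_le {k : ℝ → ℝ → ℝ} (hk : Continuous fun p : ℝ × ℝ => k p.1 p.2)
    (hnn : ∀ x y, 0 ≤ k x y) {g : ℝ → ℝ} (hg : Continuous g) (hkg : ∀ x y, k x y ≤ g x * g y)
    {t s : ℝ} (hts : t ≤ s) (n : ℕ) :
    pairingTerm k n t s ≤ (2 * ∫ u in t..s, g u) ^ (2 * n) / (2 * n)! := by
  set K := ∫ u in t..s, g u
  have hpairing : ∀ σ ∈ Finset.univ.filter (fun σ : Equiv.Perm (Fin (2 * n)) => IsNCPairing σ),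
      ∫ x in orderedSimplex (2 * n) t s, ∏ i ∈ Finset.univ.filter (fun i => i < σ i),
        k (x i) (x (σ i)) ≤ K ^ (2 * n) / (2 * n)! := by
    intro σ hσ
    have hσ := (Finset.mem_filter.mp hσ).2
    rw [← setIntegral_orderedSimplex_prod hg hts]
    refine setIntegral_mono_on ?_ ?_ (measurableSet_orderedSimplex _ t s) fun x _ => ?_
    · exact (continuous_finsetProd _ fun i _ => hk.comp ((continuous_apply i).prodMk
        (continuous_apply (σ i)))).continuousOn.integrableOn_compact (isCompact_orderedSimplex ..)
    · exact (continuous_finsetProd _ fun i _ => hg.comp (continuous_apply i))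
        |>.continuousOn.integrableOn_compact (isCompact_orderedSimplex ..)
    · calc ∏ i ∈ Finset.univ.filter (fun i => i < σ i), k (x i) (x (σ i))
          ≤ ∏ i ∈ Finset.univ.filter (fun i => i < σ i), g (x i) * g (x (σ i)) :=
            Finset.prod_le_prod (fun _ _ => hnn _ _) fun _ _ => hkg _ _
        _ = ∏ i, g (x i) := prod_filter_lt_apply_mul_apply_eq_prod hσ.1 hσ.2.1 (g ∘ x)
  have hpow : 0 ≤ K ^ (2 * n) / (2 * n)! :=
    div_nonneg ((even_two_mul n).pow_nonneg K) (by positivity)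
  calc pairingTerm k n t s
      ≤ (Finset.univ.filter fun σ : Equiv.Perm (Fin (2 * n)) => IsNCPairing σ).card
          • (K ^ (2 * n) / (2 * n)!) := Finset.sum_le_card_nsmul _ _ _ hpairing
    _ ≤ 2 ^ (2 * n) * (K ^ (2 * n) / (2 * n)!) := by
      rw [nsmul_eq_mul]
      gcongr
      exact_mod_cast card_isNCPairing_le _
    _ = (2 * K) ^ (2 * n) / (2 * n)! := by ring

theorem kraichnanSeries_le_general (k : ℝ → ℝ → ℝ)
    (hk : Continuous fun p : ℝ × ℝ => k p.1 p.2)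
    (hnn : ∀ x y, 0 ≤ k x y)
    (hcs : ∀ x y, (k x y) ^ 2 ≤ k x x * k y y)
    (t s : ℝ) (hts : t ≤ s) :
    kraichnanSeries k s t ≤ Real.exp (2 * ∫ u in t..s, Real.sqrt (k u u)) := by
  have hg : Continuous fun u => Real.sqrt (k u u) :=
    (hk.comp (continuous_id.prodMk continuous_id)).sqrt
  have hkg : ∀ x y, k x y ≤ Real.sqrt (k x x) * Real.sqrt (k y y) := fun x y => by
    rw [← Real.sqrt_mul (hnn x x)]
    exact Real.le_sqrt_of_sq_le (hcs x y)
  have hK : 0 ≤ 2 * ∫ u in t..s, Real.sqrt (k u u) :=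
    mul_nonneg zero_le_two (intervalIntegral.integral_nonneg hts fun u _ => Real.sqrt_nonneg _)
  calc kraichnanSeries k s t ≤ Real.cosh (2 * ∫ u in t..s, Real.sqrt (k u u)) :=
        tsum_le_cosh_of_le (pairingTerm_nonneg hnn · t s) (pairingTerm_le hk hnn hg hkg hts)
    _ ≤ _ := Real.cosh_le_exp_of_nonneg hK

/-- The pairing series satisfies `H(s,t) ≤ exp(2 ∫_t^s k(u,u)^{1/2} du)` for any continuous
nonnegative symmetric kernel satisfying the Cauchy–Schwarz bound. -/
theorem kraichnanSeries_le (k : ℝ → ℝ → ℝ)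
    (hk : Continuous fun p : ℝ × ℝ => k p.1 p.2)
    (hnn : ∀ x y, 0 ≤ k x y) (hsym : ∀ x y, k x y = k y x)
    (hcs : ∀ x y, (k x y) ^ 2 ≤ k x x * k y y)
    (t s : ℝ) (ht : 0 ≤ t) (hts : t ≤ s) :
    kraichnanSeries k s t ≤ Real.exp (2 * ∫ u in t..s, Real.sqrt (k u u)) :=
  kraichnanSeries_le_general k hk hnn hcs t s hts
end

section
/- Suppose k : ℝ≥0 × ℝ≥0 → ℝ is continuous and bounded by C, and H, H̃ are two continuous functions on {(s,t) : s ≥ t ≥ 0} with |H(s,t)|, |H̃(s,t)| ≤ M e^{M(s−t)}, both satisfying H(s,t) = 1 + ∫_t^s ∫_t^r H(r,u) H(u,t) k(r,u) du dr for all s ≥ t. Then H = H̃. -/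
/-!
The equation for `H` on `0 ≤ t ≤ s ≤ T` only involves values of `H` and `k` on that compact
triangle, where all the continuous data are bounded. There the difference `D = H - H'` of two
solutions satisfies `|D(s,t)| ≤ L ∫_t^s ∫_t^r (|D(r,u)| + |D(u,t)|) du dr`, and iterating this
Volterra-type inequality gives `|D(s,t)| ≤ B (2LT(s-t))ⁿ / n!` for every `n`.
-/

open Function

section DoubleIntegral

variable {f g : ℝ → ℝ → ℝ}

lemma continuous_integral_inner (hf : Continuous (uncurry f)) (t : ℝ) :
    Continuous fun r => ∫ u in t..r, f r u :=
  intervalIntegral.continuous_parametric_intervalIntegral_of_continuous hf continuous_id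

lemma integral_integral_congr {t s : ℝ} (hts : t ≤ s)
    (hfg : ∀ r u, t ≤ u → u ≤ r → r ≤ s → f r u = g r u) :
    ∫ r in t..s, ∫ u in t..r, f r u = ∫ r in t..s, ∫ u in t..r, g r u := by
  refine intervalIntegral.integral_congr fun r hr => ?_
  rw [Set.uIcc_of_le hts] at hr
  refine intervalIntegral.integral_congr fun u hu => ?_
  rw [Set.uIcc_of_le hr.1] at hu
  exact hfg r u hu.1 hu.2 hr.2

lemma integral_integral_sub {t s : ℝ} (hf : Continuous (uncurry f))
    (hg : Continuous (uncurry g)) :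
    (∫ r in t..s, ∫ u in t..r, f r u) - ∫ r in t..s, ∫ u in t..r, g r u
      = ∫ r in t..s, ∫ u in t..r, (f r u - g r u) := by
  rw [← intervalIntegral.integral_sub ((continuous_integral_inner hf t).intervalIntegrable _ _)
    ((continuous_integral_inner hg t).intervalIntegrable _ _)]
  refine intervalIntegral.integral_congr fun r _ => ?_
  exact (intervalIntegral.integral_sub
    ((hf.comp (Continuous.prodMk_right r)).intervalIntegrable _ _)
    ((hg.comp (Continuous.prodMk_right r)).intervalIntegrable _ _)).symm

lemma integral_integral_mono {t s : ℝ} (hf : Continuous (uncurry f))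
    (hg : Continuous (uncurry g)) (hts : t ≤ s)
    (hfg : ∀ r u, t ≤ u → u ≤ r → r ≤ s → f r u ≤ g r u) :
    ∫ r in t..s, ∫ u in t..r, f r u ≤ ∫ r in t..s, ∫ u in t..r, g r u := by
  refine intervalIntegral.integral_mono_on hts
    ((continuous_integral_inner hf t).intervalIntegrable _ _)
    ((continuous_integral_inner hg t).intervalIntegrable _ _) fun r hr => ?_
  exact intervalIntegral.integral_mono_on hr.1
    ((hf.comp (Continuous.prodMk_right r)).intervalIntegrable _ _)
    ((hg.comp (Continuous.prodMk_right r)).intervalIntegrable _ _)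
    fun u hu => hfg r u hu.1 hu.2 hr.2

lemma abs_integral_integral_le {t s : ℝ} (hf : Continuous (uncurry f))
    (hg : Continuous (uncurry g)) (hts : t ≤ s)
    (hfg : ∀ r u, t ≤ u → u ≤ r → r ≤ s → |f r u| ≤ g r u) :
    |∫ r in t..s, ∫ u in t..r, f r u| ≤ ∫ r in t..s, ∫ u in t..r, g r u := by
  refine (intervalIntegral.abs_integral_le_integral_abs hts).trans ?_
  refine intervalIntegral.integral_mono_on hts
    ((continuous_integral_inner hf t).abs.intervalIntegrable _ _)
    ((continuous_integral_inner hg t).intervalIntegrable _ _) fun r hr => ?_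
  refine (intervalIntegral.abs_integral_le_integral_abs hr.1).trans ?_
  exact intervalIntegral.integral_mono_on hr.1
    ((hf.comp (Continuous.prodMk_right r)).abs.intervalIntegrable _ _)
    ((hg.comp (Continuous.prodMk_right r)).intervalIntegrable _ _)
    fun u hu => hfg r u hu.1 hu.2 hr.2

lemma integral_integral_pow (t s c : ℝ) (n : ℕ) :
    ∫ r in t..s, ∫ _u in t..r, c * (r - t) ^ n = c * (s - t) ^ (n + 2) / (n + 2) := by
  have inner : ∀ r, ∫ _u in t..r, c * (r - t) ^ n = c * (r - t) ^ (n + 1) := fun r => by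
    rw [intervalIntegral.integral_const, smul_eq_mul]; ring
  simp only [inner, intervalIntegral.integral_const_mul,
    intervalIntegral.integral_comp_sub_right (fun x => x ^ (n + 1)), integral_pow]
  push_cast; ring

end DoubleIntegral

section Gronwall

variable {D : ℝ → ℝ → ℝ} {L a b : ℝ}

lemma continuous_mul_abs_add_abs (hD : Continuous (uncurry D)) (L t : ℝ) :
    Continuous (uncurry fun r u => L * (|D r u| + |D u t|)) :=
  continuous_const.mul (hD.abs.add (hD.comp (continuous_snd.prodMk continuous_const)).abs)

lemma abs_le_pow_add_two_of_abs_le_pow (hD : Continuous (uncurry D)) (hL : 0 ≤ L)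
    (hle : ∀ s t, a ≤ t → t ≤ s → s ≤ b →
      |D s t| ≤ ∫ r in t..s, ∫ u in t..r, L * (|D r u| + |D u t|))
    {c : ℝ} (hc : 0 ≤ c) {n : ℕ}
    (hn : ∀ s t, a ≤ t → t ≤ s → s ≤ b → |D s t| ≤ c * (s - t) ^ n) :
    ∀ s t, a ≤ t → t ≤ s → s ≤ b → |D s t| ≤ 2 * L * c * (s - t) ^ (n + 2) / (n + 2) := by
  intro s t hat hts hsb
  calc |D s t| ≤ ∫ r in t..s, ∫ u in t..r, L * (|D r u| + |D u t|) := hle s t hat hts hsb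
    _ ≤ ∫ r in t..s, ∫ _u in t..r, 2 * L * c * (r - t) ^ n := by
      refine integral_integral_mono (continuous_mul_abs_add_abs hD L t) (by fun_prop) hts
        fun r u htu hur hrs => ?_
      have hru : |D r u| ≤ c * (r - t) ^ n := (hn r u (hat.trans htu) hur (hrs.trans hsb)).trans
        (by gcongr)
      have hut : |D u t| ≤ c * (r - t) ^ n := (hn u t hat htu (hur.trans (hrs.trans hsb))).trans
        (by gcongr)
      nlinarith
    _ = 2 * L * c * (s - t) ^ (n + 2) / (n + 2) := integral_integral_pow t s _ n

theorem eq_zero_of_abs_le_integral_integral (hD : Continuous (uncurry D)) (hL : 0 ≤ L) {B : ℝ}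
    (hB : ∀ s t, a ≤ t → t ≤ s → s ≤ b → |D s t| ≤ B)
    (hle : ∀ s t, a ≤ t → t ≤ s → s ≤ b →
      |D s t| ≤ ∫ r in t..s, ∫ u in t..r, L * (|D r u| + |D u t|)) :
    ∀ s t, a ≤ t → t ≤ s → s ≤ b → D s t = 0 := by
  obtain ⟨K, hKdef⟩ : ∃ K, K = 2 * L * (b - a) := ⟨_, rfl⟩
  have key : ∀ n : ℕ, ∀ s t, a ≤ t → t ≤ s → s ≤ b →
      |D s t| ≤ B * K ^ n / n.factorial * (s - t) ^ n := by
    intro n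
    induction n with
    | zero => simpa using hB
    | succ n ih =>
      intro s t hat hts hsb
      have hB0 : 0 ≤ B := (abs_nonneg _).trans (hB s t hat hts hsb)
      have hab : 0 ≤ b - a := by linarith
      have hK : 0 ≤ K := by rw [hKdef]; positivity
      refine (abs_le_pow_add_two_of_abs_le_pow hD hL hle (by positivity) ih
        s t hat hts hsb).trans ?_
      have hst : s - t ≤ b - a := by linarith
      calc 2 * L * (B * K ^ n / n.factorial) * (s - t) ^ (n + 2) / (n + 2)
          = 2 * L * (B * K ^ n / n.factorial) * ((s - t) ^ (n + 1) * (s - t)) / (n + 2) := by ring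
        _ ≤ 2 * L * (B * K ^ n / n.factorial) * ((s - t) ^ (n + 1) * (b - a)) / (n + 1) := by
          gcongr
          linarith
        _ = B * K ^ (n + 1) / (n + 1).factorial * (s - t) ^ (n + 1) := by
          rw [Nat.factorial_succ, hKdef]; push_cast; field_simp; ring
  intro s t hat hts hsb
  have hlim : Filter.Tendsto (fun n : ℕ => B * K ^ n / n.factorial * (s - t) ^ n)
      Filter.atTop (nhds 0) := by
    convert (FloorSemiring.tendsto_pow_div_factorial_atTop (K * (s - t))).const_mul B using 2
    · rw [mul_pow]; ring
    · simp
  exact abs_nonpos_iff.mp (ge_of_tendsto' hlim fun n => key n s t hat hts hsb)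

end Gronwall

lemma abs_mul_mul_sub_mul_mul_le {x x' y y' κ A C : ℝ} (hy : |y| ≤ A) (hx' : |x'| ≤ A)
    (hκ : |κ| ≤ C) : |x * y * κ - x' * y' * κ| ≤ C * A * (|x - x'| + |y - y'|) := by
  have hA : 0 ≤ A := (abs_nonneg y).trans hy
  calc |x * y * κ - x' * y' * κ| = |(x - x') * y + x' * (y - y')| * |κ| := by
        rw [← abs_mul]; ring_nf
    _ ≤ (|x - x'| * |y| + |x'| * |y - y'|) * |κ| := by
        gcongr; exact (abs_add_le _ _).trans_eq (by rw [abs_mul, abs_mul])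
    _ ≤ (|x - x'| * A + A * |y - y'|) * C := by gcongr
    _ = C * A * (|x - x'| + |y - y'|) := by ring

lemma exists_bound_on_triangle {f : ℝ → ℝ → ℝ} (hf : Continuous (uncurry f)) (T : ℝ) :
    ∃ A, 0 ≤ A ∧ ∀ s t, 0 ≤ t → t ≤ s → s ≤ T → |f s t| ≤ A := by
  obtain ⟨A, hA⟩ := (isCompact_Icc (a := ((0 : ℝ), (0 : ℝ))) (b := (T, T)))
    |>.exists_bound_of_continuousOn hf.continuousOn
  refine ⟨max A 0, le_max_right _ _, fun s t ht hts hsT => (hA (s, t) ?_).trans (le_max_left _ _)⟩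
  exact ⟨⟨ht.trans hts, ht⟩, ⟨hsT, hts.trans hsT⟩⟩

lemma exists_continuous_eq_on_triangle {H : ℝ → ℝ → ℝ}
    (hH : ContinuousOn (fun p : ℝ × ℝ => H p.1 p.2) {p | 0 ≤ p.2 ∧ p.2 ≤ p.1}) :
    ∃ G : ℝ → ℝ → ℝ, Continuous (uncurry G) ∧ ∀ s t, 0 ≤ t → t ≤ s → G s t = H s t := by
  refine ⟨fun s t => H (max s (max t 0)) (max t 0), ?_, fun s t ht hts => ?_⟩
  · exact hH.comp_continuous (f := fun p : ℝ × ℝ => (max p.1 (max p.2 0), max p.2 0))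
      (by fun_prop) fun p => ⟨le_max_right _ _, le_max_right _ _⟩
  · simp only [max_eq_left ht, max_eq_left hts]

def SolvesKraichnan (k H : ℝ → ℝ → ℝ) : Prop :=
  ∀ s t, 0 ≤ t → t ≤ s → H s t = 1 + ∫ r in t..s, ∫ u in t..r, H r u * H u t * k r u

namespace SolvesKraichnan

variable {k G H : ℝ → ℝ → ℝ}

lemma congr (hH : SolvesKraichnan k H) (hGH : ∀ s t, 0 ≤ t → t ≤ s → G s t = H s t) :
    SolvesKraichnan k G := by
  intro s t ht hts
  rw [hGH s t ht hts, hH s t ht hts]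
  congr 1
  exact integral_integral_congr hts fun r u htu hur _ => by
    rw [hGH r u (ht.trans htu) hur, hGH u t ht htu]

lemma continuous_integrand (hk : Continuous (uncurry k)) (hG : Continuous (uncurry G)) (t : ℝ) :
    Continuous (uncurry fun r u => G r u * G u t * k r u) :=
  (hG.mul (hG.comp (continuous_snd.prodMk continuous_const))).mul hk

theorem eq_of_continuous (hk : Continuous (uncurry k)) (hG : SolvesKraichnan k G)
    (hH : SolvesKraichnan k H) (hGc : Continuous (uncurry G)) (hHc : Continuous (uncurry H)) :
    ∀ s t, 0 ≤ t → t ≤ s → G s t = H s t := by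
  intro s t ht hts
  obtain ⟨AG, -, hAG⟩ := exists_bound_on_triangle hGc s
  obtain ⟨AH, -, hAH⟩ := exists_bound_on_triangle hHc s
  obtain ⟨C, hC, hCk⟩ := exists_bound_on_triangle hk s
  set A := max AG AH
  have hGA : ∀ a b, 0 ≤ b → b ≤ a → a ≤ s → |G a b| ≤ A :=
    fun a b hb hba has => (hAG a b hb hba has).trans (le_max_left _ _)
  have hHA : ∀ a b, 0 ≤ b → b ≤ a → a ≤ s → |H a b| ≤ A :=
    fun a b hb hba has => (hAH a b hb hba has).trans (le_max_right _ _)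
  have hA : 0 ≤ A := (abs_nonneg _).trans (hGA s t ht hts le_rfl)
  have hD : Continuous (uncurry fun a b => G a b - H a b) := hGc.sub hHc
  refine sub_eq_zero.mp (eq_zero_of_abs_le_integral_integral hD (mul_nonneg hC hA) (B := 2 * A)
    (fun a b hb hba has => ?_) (fun a b hb hba has => ?_) s t ht hts le_rfl)
  · linarith [abs_sub (G a b) (H a b), hGA a b hb hba has, hHA a b hb hba has]
  · rw [hG a b hb hba, hH a b hb hba, add_sub_add_left_eq_sub,
      integral_integral_sub (continuous_integrand hk hGc b) (continuous_integrand hk hHc b)]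
    refine abs_integral_integral_le ((continuous_integrand hk hGc b).sub
      (continuous_integrand hk hHc b)) ?_ hba fun r u hbu hur hra => ?_
    · exact continuous_mul_abs_add_abs hD _ b
    · exact abs_mul_mul_sub_mul_mul_le (hGA u b hb hbu (hur.trans (hra.trans has)))
        (hHA r u (hb.trans hbu) hur (hra.trans has)) (hCk r u (hb.trans hbu) hur (hra.trans has))

end SolvesKraichnan

theorem kraichnan_uniqueness_general
    (k : ℝ → ℝ → ℝ) (hk : Continuous fun p : ℝ × ℝ => k p.1 p.2)
    (H H' : ℝ → ℝ → ℝ)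
    (hHc : ContinuousOn (fun p : ℝ × ℝ => H p.1 p.2) {p | 0 ≤ p.2 ∧ p.2 ≤ p.1})
    (hH'c : ContinuousOn (fun p : ℝ × ℝ => H' p.1 p.2) {p | 0 ≤ p.2 ∧ p.2 ≤ p.1})
    (hHeq : ∀ s t, 0 ≤ t → t ≤ s →
      H s t = 1 + ∫ r in t..s, ∫ u in t..r, H r u * H u t * k r u)
    (hH'eq : ∀ s t, 0 ≤ t → t ≤ s →
      H' s t = 1 + ∫ r in t..s, ∫ u in t..r, H' r u * H' u t * k r u) :
    ∀ s t, 0 ≤ t → t ≤ s → H s t = H' s t := by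
  intro s t ht hts
  obtain ⟨G, hGc, hGH⟩ := exists_continuous_eq_on_triangle hHc
  obtain ⟨G', hG'c, hG'H⟩ := exists_continuous_eq_on_triangle hH'c
  have hG : SolvesKraichnan k G := SolvesKraichnan.congr hHeq hGH
  have hG' : SolvesKraichnan k G' := SolvesKraichnan.congr hH'eq hG'H
  rw [← hGH s t ht hts, ← hG'H s t ht hts]
  exact hG.eq_of_continuous hk hG' hGc hG'c s t ht hts

/-- Uniqueness for the integrated Kraichnan equation in the class of continuous functions
with exponential growth `|H(s,t)| ≤ M e^{M(s−t)}`. -/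
theorem kraichnan_uniqueness (C M : ℝ) (hC : 0 < C) (hM : 0 < M)
    (k : ℝ → ℝ → ℝ) (hk : Continuous fun p : ℝ × ℝ => k p.1 p.2)
    (hkb : ∀ x y, |k x y| ≤ C)
    (H H' : ℝ → ℝ → ℝ)
    (hHc : ContinuousOn (fun p : ℝ × ℝ => H p.1 p.2) {p | 0 ≤ p.2 ∧ p.2 ≤ p.1})
    (hH'c : ContinuousOn (fun p : ℝ × ℝ => H' p.1 p.2) {p | 0 ≤ p.2 ∧ p.2 ≤ p.1})
    (hHb : ∀ s t, 0 ≤ t → t ≤ s → |H s t| ≤ M * Real.exp (M * (s - t)))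
    (hH'b : ∀ s t, 0 ≤ t → t ≤ s → |H' s t| ≤ M * Real.exp (M * (s - t)))
    (hHeq : ∀ s t, 0 ≤ t → t ≤ s →
      H s t = 1 + ∫ r in t..s, ∫ u in t..r, H r u * H u t * k r u)
    (hH'eq : ∀ s t, 0 ≤ t → t ≤ s →
      H' s t = 1 + ∫ r in t..s, ∫ u in t..r, H' r u * H' u t * k r u) :
    ∀ s t, 0 ≤ t → t ≤ s → H s t = H' s t :=
  kraichnan_uniqueness_general k hk H H' hHc hH'c hHeq hH'eq
end

section
/- If k(t,s) = h(t)h(s) for a continuous nonnegative function h, then H(s,t) = E[exp(S ∫_t^s h(u) du)], where S has the semicircle law, solves the Kraichnan equation ∂_s H(s,t) = ∫_t^s H(s,u)H(u,t)k(s,u)du with H(t,t)=1. -/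
open MeasureTheory

/-- The semicircle density: `(1/(2π))·√(4−x²)` on `[−2,2]`, `0` elsewhere. -/
noncomputable def semicircleDensity (y : ℝ) : ℝ :=
  Set.indicator (Set.Icc (-2) 2) (fun y => (1 / (2 * Real.pi)) * Real.sqrt (4 - y ^ 2)) y

/-!
Write `F x = E[exp (x S)]`. Then `H s t = F (∫_t^s h)`, and by the chain rule and the substitution
`y = ∫_t^u h` the Kraichnan equation reduces to the single identity
`F' x = ∫_0^x F (x - y) F y dy`. Expanding `F x = ∑ mₙ xⁿ / n!` in the moments of `S`, and using
that the convolution of `xⁱ / i!` with `xʲ / j!` on `[0, x]` is `x^(i+j+1) / (i+j+1)!`, this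
identity becomes `m_{n+2} = ∑_{i+j=n} mᵢ mⱼ`. That is the Catalan recursion: the substitution
`y = 2 sin θ` gives `(n + 4) m_{n+2} = 4 (n + 1) mₙ`, so the odd moments vanish and the even
ones are the Catalan numbers.
-/

open Real Finset intervalIntegral
open scoped Nat Interval

noncomputable def egf (a : ℕ → ℝ) (x : ℝ) : ℝ := ∑' n, a n * x ^ n / n !

lemma hasDerivAt_pow_succ_div_factorial (n : ℕ) (t : ℝ) :
    HasDerivAt (fun t : ℝ => t ^ (n + 1) / (n + 1)!) (t ^ n / n !) t := by
  refine ((hasDerivAt_pow (n + 1) t).div_const _).congr_deriv ?_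
  push_cast [Nat.factorial_succ]
  field_simp

lemma integral_sub_pow_div_factorial_mul_pow_div_factorial (i j : ℕ) (x : ℝ) :
    ∫ t in 0..x, (x - t) ^ i / i ! * (t ^ j / j !) = x ^ (i + j + 1) / (i + j + 1)! := by
  induction i generalizing j with
  | zero =>
    simp only [pow_zero, Nat.factorial_zero, Nat.cast_one, div_one, one_mul, zero_add]
    rw [integral_eq_sub_of_hasDerivAt (fun t _ => hasDerivAt_pow_succ_div_factorial j t)
      (Continuous.intervalIntegrable (by fun_prop) _ _)]
    simp
  | succ i ih =>
    have hu : ∀ t ∈ Set.uIcc 0 x, HasDerivAt (fun t => (x - t) ^ (i + 1) / (i + 1)!)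
        (-((x - t) ^ i / i !)) t := fun t _ =>
      ((hasDerivAt_pow_succ_div_factorial i (x - t)).comp t
        ((hasDerivAt_id t).const_sub x)).congr_deriv (by ring)
    rw [intervalIntegral.integral_mul_deriv_eq_deriv_mul hu
      (fun t _ => hasDerivAt_pow_succ_div_factorial j t)
      (Continuous.intervalIntegrable (by fun_prop) _ _)
      (Continuous.intervalIntegrable (by fun_prop) _ _)]
    simp only [neg_mul, intervalIntegral.integral_neg, ih]
    simp [show i + 1 + j + 1 = i + (j + 1) + 1 by ring]

lemma egf_zero (a : ℕ → ℝ) : egf a 0 = a 0 := by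
  rw [egf, tsum_eq_single 0 (fun n hn => by simp [hn])]
  simp

section egf

variable {a b : ℕ → ℝ} {C R r x : ℝ}

lemma summable_egf_majorant (ha : ∀ n, |a n| ≤ C * R ^ n) (z : ℝ) :
    Summable fun n => ‖a n‖ * |z| ^ n / n ! := by
  refine .of_nonneg_of_le (fun _ => by positivity) (fun n => ?_)
    ((summable_pow_div_factorial (R * |z|)).mul_left C)
  rw [Real.norm_eq_abs, mul_div_assoc]
  calc |a n| * (|z| ^ n / n !) ≤ C * R ^ n * (|z| ^ n / n !) := by gcongr; exact ha n
    _ = C * ((R * |z|) ^ n / n !) := by ring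

lemma norm_egf_term_le (n : ℕ) (hx : |x| ≤ r) : ‖a n * x ^ n / (n !)‖ ≤ ‖a n‖ * r ^ n / n ! := by
  rw [norm_div, norm_mul, norm_pow, RCLike.norm_natCast, Real.norm_eq_abs x]
  gcongr

lemma summable_norm_egf_term (ha : Summable fun n => ‖a n‖ * r ^ n / n !) (hx : |x| ≤ r) :
    Summable fun n => ‖a n * x ^ n / (n !)‖ :=
  ha.of_nonneg_of_le (fun _ => norm_nonneg _) (fun n => norm_egf_term_le n hx)

lemma egf_eq_add_tsum (ha : ∀ n, |a n| ≤ C * R ^ n) (x : ℝ) :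
    egf a x = a 0 + ∑' n, a (n + 1) * x ^ (n + 1) / (n + 1)! := by
  rw [egf, (summable_norm_egf_term (summable_egf_majorant ha x) le_rfl).of_norm.tsum_eq_zero_add]
  simp

lemma hasDerivAt_egf (ha : ∀ n, |a n| ≤ C * R ^ n) (x : ℝ) :
    HasDerivAt (egf a) (egf (fun n => a (n + 1)) x) x := by
  have hbound : ∀ n, ∀ y ∈ Metric.ball x 1,
      ‖a (n + 1) * y ^ n / (n !)‖ ≤ C * R ^ (n + 1) * (|x| + 1) ^ n / n ! := by
    intro n y hy
    have hy' : |y| ≤ |x| + 1 := by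
      have := abs_sub_abs_le_abs_sub y x
      rw [Metric.mem_ball, Real.dist_eq] at hy
      linarith
    rw [norm_div, norm_mul, norm_pow, RCLike.norm_natCast, Real.norm_eq_abs, Real.norm_eq_abs]
    gcongr
    · exact (abs_nonneg _).trans (ha _)
    · exact ha _
  have hu : Summable fun n => C * R ^ (n + 1) * (|x| + 1) ^ n / n ! := by
    refine ((summable_pow_div_factorial (R * (|x| + 1))).mul_left (C * R)).congr fun n => ?_
    rw [mul_pow]
    ring
  have h0 : Summable fun n => a (n + 1) * x ^ (n + 1) / (n + 1)! :=
    ((summable_nat_add_iff 1).mpr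
      (summable_norm_egf_term (summable_egf_majorant ha x) le_rfl)).of_norm
  rw [show egf a = _ from funext (egf_eq_add_tsum ha)]
  refine (hasDerivAt_tsum_of_isPreconnected hu Metric.isOpen_ball
    (convex_ball x 1).isPreconnected (fun n y _ => ?_) hbound (Metric.mem_ball_self one_pos) h0
    (Metric.mem_ball_self one_pos)).const_add _
  simpa only [mul_div_assoc] using (hasDerivAt_pow_succ_div_factorial n y).const_mul (a (n + 1))

lemma integral_egf_sub_mul_egf (ha : Summable fun n => ‖a n‖ * |x| ^ n / n !)
    (hb : Summable fun n => ‖b n‖ * |x| ^ n / n !) :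
    ∫ t in 0..x, egf a (x - t) * egf b t =
      ∑' n, (∑ p ∈ antidiagonal n, a p.1 * b p.2) * x ^ (n + 1) / (n + 1)! := by
  set c : ℕ → ℝ → ℝ := fun n t =>
    ∑ p ∈ antidiagonal n, a p.1 * (x - t) ^ p.1 / p.1 ! * (b p.2 * t ^ p.2 / p.2 !)
  have hmem : ∀ t ∈ Ι 0 x, |x - t| ≤ |x| ∧ |t| ≤ |x| := by
    intro t ht
    rcases Set.mem_uIcc.mp (Set.uIoc_subset_uIcc ht) with ⟨h₁, h₂⟩ | ⟨h₁, h₂⟩ <;>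
      refine ⟨abs_le.mpr ⟨?_, ?_⟩, abs_le.mpr ⟨?_, ?_⟩⟩ <;> linarith [le_abs_self x, neg_abs_le x]
  have hterm : ∀ n, ∫ t in 0..x, c n t =
      (∑ p ∈ antidiagonal n, a p.1 * b p.2) * x ^ (n + 1) / (n + 1)! := by
    intro n
    rw [integral_finsetSum (fun p _ => Continuous.intervalIntegrable (by fun_prop) _ _),
      Finset.sum_mul, Finset.sum_div]
    refine Finset.sum_congr rfl fun p hp => ?_
    rw [← mem_antidiagonal.mp hp, mul_div_assoc,
      ← integral_sub_pow_div_factorial_mul_pow_div_factorial, ← intervalIntegral.integral_const_mul]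
    congr 1 with t
    ring
  have hsum := summable_norm_sum_mul_antidiagonal_of_summable_norm
    (ha.congr fun n => (norm_of_nonneg (by positivity)).symm)
    (hb.congr fun n => (norm_of_nonneg (by positivity)).symm)
  have key := hasSum_integral_of_dominated_convergence (a := 0) (b := x) (μ := volume) (F := c)
    (f := fun t => egf a (x - t) * egf b t)
    (fun n _ =>
      ‖∑ p ∈ antidiagonal n, ‖a p.1‖ * |x| ^ p.1 / p.1 ! * (‖b p.2‖ * |x| ^ p.2 / p.2 !)‖)
    (fun n => (Continuous.aestronglyMeasurable (by fun_prop)))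
    (fun n => ae_of_all _ fun t ht => ?_) (ae_of_all _ fun _ _ => hsum) intervalIntegrable_const
    (ae_of_all _ fun t ht => ?_)
  · exact key.tsum_eq.symm.trans (tsum_congr hterm)
  · refine (norm_sum_le _ _).trans (le_trans (sum_le_sum fun p _ => ?_) (le_abs_self _))
    rw [norm_mul]
    exact mul_le_mul (norm_egf_term_le _ (hmem t ht).1) (norm_egf_term_le _ (hmem t ht).2)
      (norm_nonneg _) (by positivity)
  · have hA := summable_norm_egf_term ha (hmem t ht).1
    have hB := summable_norm_egf_term hb (hmem t ht).2
    rw [egf, egf, tsum_mul_tsum_eq_tsum_sum_antidiagonal_of_summable_norm hA hB]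
    exact (summable_norm_sum_mul_antidiagonal_of_summable_norm hA hB).of_norm.hasSum

end egf

lemma integral_sin_pow_add_two_centered (n : ℕ) :
    ∫ θ in -(π / 2)..π / 2, sin θ ^ (n + 2) =
      (n + 1) / (n + 2) * ∫ θ in -(π / 2)..π / 2, sin θ ^ n := by
  simp [integral_sin_pow]

lemma integral_sin_pow_mul_cos_sq_centered (n : ℕ) :
    ∫ θ in -(π / 2)..π / 2, sin θ ^ n * cos θ ^ 2 =
      (∫ θ in -(π / 2)..π / 2, sin θ ^ n) / (n + 2) := by
  have h : ∀ θ, sin θ ^ n * cos θ ^ 2 = sin θ ^ n - sin θ ^ (n + 2) := fun θ => by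
    rw [cos_sq']; ring
  simp_rw [h]
  rw [integral_sub (Continuous.intervalIntegrable (by fun_prop) _ _)
    (Continuous.intervalIntegrable (by fun_prop) _ _), integral_sin_pow_add_two_centered]
  field_simp
  ring

lemma integral_mul_semicircleDensity (f : ℝ → ℝ) :
    ∫ y, f y * semicircleDensity y = ∫ y in -2..2, f y * (1 / (2 * π) * √(4 - y ^ 2)) := by
  rw [intervalIntegral.integral_of_le (by norm_num), ← integral_Icc_eq_integral_Ioc,
    ← MeasureTheory.integral_indicator measurableSet_Icc]
  congr 1 with y
  simp only [semicircleDensity, ← Set.indicator_mul_right]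

noncomputable def semicircleMoment (n : ℕ) : ℝ := ∫ y, y ^ n * semicircleDensity y

lemma semicircleMoment_eq_integral_sin_pow (n : ℕ) :
    semicircleMoment n = 2 ^ (n + 1) / (π * (n + 2)) * ∫ θ in -(π / 2)..π / 2, sin θ ^ n := by
  have hsub := integral_comp_mul_deriv (a := -(π / 2)) (b := π / 2) (f := fun θ => 2 * sin θ)
    (fun θ _ => (hasDerivAt_sin θ).const_mul 2) (by fun_prop : Continuous _).continuousOn
    (by fun_prop : Continuous fun y : ℝ => y ^ n * (1 / (2 * π) * √(4 - y ^ 2)))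
  simp only [sin_neg, sin_pi_div_two, mul_one, mul_neg] at hsub
  suffices semicircleMoment n = 2 ^ (n + 1) / π * ∫ θ in -(π / 2)..π / 2, sin θ ^ n * cos θ ^ 2 by
    rw [this, integral_sin_pow_mul_cos_sq_centered]
    field_simp
  rw [semicircleMoment, integral_mul_semicircleDensity, ← hsub,
    ← intervalIntegral.integral_const_mul]
  refine integral_congr fun θ hθ => ?_
  rw [Set.uIcc_of_le (by linarith [pi_pos])] at hθ
  have hcos : √(4 - (2 * sin θ) ^ 2) = 2 * cos θ := by
    rw [show 4 - (2 * sin θ) ^ 2 = (2 * cos θ) ^ 2 by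
        linear_combination (-4) * sin_sq_add_cos_sq θ,
      sqrt_sq (by linarith [cos_nonneg_of_mem_Icc hθ])]
  simp only [Function.comp_apply, hcos]
  field_simp
  ring

lemma semicircleMoment_zero : semicircleMoment 0 = 1 := by
  simp [semicircleMoment_eq_integral_sin_pow]
  field_simp

lemma semicircleMoment_one : semicircleMoment 1 = 0 := by
  simp [semicircleMoment_eq_integral_sin_pow]

lemma semicircleMoment_add_two (n : ℕ) :
    (n + 4) * semicircleMoment (n + 2) = 4 * (n + 1) * semicircleMoment n := by
  rw [semicircleMoment_eq_integral_sin_pow, semicircleMoment_eq_integral_sin_pow,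
    integral_sin_pow_add_two_centered]
  push_cast
  field_simp
  ring

lemma succ_succ_mul_catalan_succ (n : ℕ) :
    (n + 2) * catalan (n + 1) = 2 * (2 * n + 1) * catalan n := by
  apply Nat.eq_of_mul_eq_mul_left (show 0 < n + 1 by omega)
  rw [succ_mul_catalan_eq_centralBinom (n + 1), Nat.succ_mul_centralBinom_succ,
    ← succ_mul_catalan_eq_centralBinom]
  ring

lemma semicircleMoment_two_mul (k : ℕ) : semicircleMoment (2 * k) = catalan k := by
  induction k with
  | zero => simp [semicircleMoment_zero]
  | succ k ih =>
    have h := semicircleMoment_add_two (2 * k)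
    have hc : ((k + 2 : ℕ) : ℝ) * catalan (k + 1) = 2 * (2 * k + 1) * catalan k := by
      exact_mod_cast succ_succ_mul_catalan_succ k
    rw [ih] at h
    push_cast at h hc
    rw [show 2 * (k + 1) = 2 * k + 2 by ring]
    apply mul_left_cancel₀ (show (2 * k + 4 : ℝ) ≠ 0 by positivity)
    linear_combination h - 2 * hc

lemma semicircleMoment_of_odd {n : ℕ} (hn : Odd n) : semicircleMoment n = 0 := by
  obtain ⟨k, rfl⟩ := hn
  induction k with
  | zero => simpa using semicircleMoment_one
  | succ k ih =>
    have h := semicircleMoment_add_two (2 * k + 1)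
    rw [ih, mul_zero, show 2 * k + 1 + 2 = 2 * (k + 1) + 1 by ring] at h
    exact (mul_eq_zero.mp h).resolve_left (by positivity)

lemma abs_semicircleMoment_le (n : ℕ) : |semicircleMoment n| ≤ 2 ^ n := by
  induction n using Nat.twoStepInduction with
  | zero => simp [semicircleMoment_zero]
  | one => simp [semicircleMoment_one]
  | more n ih _ =>
    have h : (n + 4 : ℝ) * |semicircleMoment (n + 2)| = 4 * (n + 1) * |semicircleMoment n| := by
      have := congrArg abs (semicircleMoment_add_two n)
      rwa [abs_mul, abs_mul, abs_of_pos (by positivity : (0 : ℝ) < n + 4),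
        abs_of_pos (by positivity : (0 : ℝ) < 4 * (n + 1))] at this
    have h4 : (n + 4 : ℝ) * |semicircleMoment (n + 2)| ≤ (n + 4) * 2 ^ (n + 2) := by
      rw [h, pow_add]
      nlinarith [abs_nonneg (semicircleMoment n)]
    exact le_of_mul_le_mul_left h4 (by positivity)

lemma semicircleMoment_add_two_eq_sum (n : ℕ) :
    semicircleMoment (n + 2) =
      ∑ p ∈ antidiagonal n, semicircleMoment p.1 * semicircleMoment p.2 := by
  rcases Nat.even_or_odd n with ⟨k, rfl⟩ | hn
  · set double : ℕ × ℕ → ℕ × ℕ := fun p => (2 * p.1, 2 * p.2)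
    have hinj : Set.InjOn double (antidiagonal k) := fun p _ q _ h => by
      simp only [double, Prod.ext_iff] at h ⊢
      omega
    have hsub : (antidiagonal k).image double ⊆ antidiagonal (k + k) := by
      intro q hq
      obtain ⟨p, hp, rfl⟩ := mem_image.mp hq
      simp only [HasAntidiagonal.mem_antidiagonal, double] at hp ⊢
      omega
    have hzero : ∀ q ∈ antidiagonal (k + k), q ∉ (antidiagonal k).image double →
        semicircleMoment q.1 * semicircleMoment q.2 = 0 := by
      intro q hq hq'
      refine mul_eq_zero_of_left (semicircleMoment_of_odd ?_) _
      rw [← Nat.not_even_iff_odd]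
      rintro ⟨a, ha⟩
      refine hq' (mem_image.mpr ⟨(a, k - a), ?_, ?_⟩) <;>
        simp only [HasAntidiagonal.mem_antidiagonal, double, Prod.ext_iff] at hq ⊢ <;> omega
    rw [← sum_subset hsub hzero, sum_image hinj, show k + k + 2 = 2 * (k + 1) by ring,
      semicircleMoment_two_mul, catalan_succ']
    push_cast
    simp only [double, semicircleMoment_two_mul]
  · rw [semicircleMoment_of_odd (hn.add_even even_two)]
    refine (sum_eq_zero fun p hp => ?_).symm
    rw [← HasAntidiagonal.mem_antidiagonal.mp hp] at hn
    rcases Nat.even_or_odd p.1 with h1 | h1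
    · exact mul_eq_zero_of_right _ (semicircleMoment_of_odd ((Nat.odd_add'.mp hn).mpr h1))
    · exact mul_eq_zero_of_left (semicircleMoment_of_odd h1) _

lemma integral_exp_mul_semicircleDensity_eq_egf (x : ℝ) :
    ∫ y, exp (x * y) * semicircleDensity y = egf semicircleMoment x := by
  set w : ℝ → ℝ := fun y => 1 / (2 * π) * √(4 - y ^ 2)
  have key := hasSum_integral_of_dominated_convergence (a := -2) (b := 2) (μ := volume)
    (F := fun n y => (x * y) ^ n / n ! * w y) (f := fun y => exp (x * y) * w y)
    (fun n y => (2 * |x|) ^ n / n ! * |w y|)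
    (fun n => Continuous.aestronglyMeasurable (by fun_prop))
    (fun n => ae_of_all _ fun y hy => ?_)
    (ae_of_all _ fun y _ => (summable_pow_div_factorial _).mul_right _)
    (by simp_rw [tsum_mul_right]; exact Continuous.intervalIntegrable (by fun_prop) _ _)
    (ae_of_all _ fun y _ => ?_)
  · rw [integral_mul_semicircleDensity, ← key.tsum_eq, egf]
    refine tsum_congr fun n => ?_
    rw [semicircleMoment, integral_mul_semicircleDensity, ← intervalIntegral.integral_mul_const,
      ← intervalIntegral.integral_div]
    congr 1 with y
    ring
  · have hy' : |y| ≤ 2 := by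
      have := Set.uIoc_subset_uIcc hy
      rw [Set.uIcc_of_le (by norm_num)] at this
      exact abs_le.mpr this
    rw [norm_mul, norm_div, norm_pow, RCLike.norm_natCast, Real.norm_eq_abs, Real.norm_eq_abs,
      abs_mul, mul_comm 2 |x|]
    gcongr
  · rw [Real.exp_eq_exp_ℝ]
    exact (NormedSpace.expSeries_div_hasSum_exp (x * y)).mul_right (w y)

lemma hasDerivAt_egf_semicircleMoment (x : ℝ) :
    HasDerivAt (egf semicircleMoment)
      (∫ t in 0..x, egf semicircleMoment (x - t) * egf semicircleMoment t) x := by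
  have hm : ∀ n, |semicircleMoment n| ≤ 1 * 2 ^ n := by simpa using abs_semicircleMoment_le
  have hm' : ∀ n, |semicircleMoment (n + 1)| ≤ 2 * 2 ^ n := fun n => by
    simpa [pow_succ, mul_comm] using abs_semicircleMoment_le (n + 1)
  have hsum := summable_egf_majorant hm x
  convert hasDerivAt_egf hm x using 1
  rw [integral_egf_sub_mul_egf hsum hsum, egf_eq_add_tsum hm', semicircleMoment_one, zero_add]
  simp only [semicircleMoment_add_two_eq_sum]

theorem decoupled_kernel_solution_general (h : ℝ → ℝ) (hc : Continuous h)
    (H : ℝ → ℝ → ℝ)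
    (hH : ∀ s t, H s t = ∫ y : ℝ, Real.exp ((∫ u in t..s, h u) * y) * semicircleDensity y) :
    (∀ t, H t t = 1) ∧
    ∀ t s, 0 ≤ t → t ≤ s →
      HasDerivAt (fun r => H r t) (∫ u in t..s, H s u * H u t * (h s * h u)) s := by
  set F := egf semicircleMoment
  have hHF : ∀ s t, H s t = F (∫ u in t..s, h u) := fun s t => by
    rw [hH, integral_exp_mul_semicircleDensity_eq_egf]
  refine ⟨fun t => by simp [hHF, F, egf_zero, semicircleMoment_zero], fun t s _ _ => ?_⟩
  set A : ℝ → ℝ := fun r => ∫ u in t..r, h u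
  have hA : ∀ r, HasDerivAt A (h r) r := fun r => (hc.integral_hasStrictDerivAt t r).hasDerivAt
  have hsub : ∀ u, ∫ v in u..s, h v = A s - A u := fun u =>
    (integral_interval_sub_left (hc.intervalIntegrable _ _) (hc.intervalIntegrable _ _)).symm
  have hF : Continuous F := continuous_iff_continuousAt.mpr fun x =>
    (hasDerivAt_egf_semicircleMoment x).continuousAt
  have hrhs : ∫ u in t..s, H s u * H u t * (h s * h u) =
      (∫ y in 0..A s, F (A s - y) * F y) * h s := by
    calc ∫ u in t..s, H s u * H u t * (h s * h u)
        = (∫ u in t..s, ((fun y => F (A s - y) * F y) ∘ A) u * h u) * h s := by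
          rw [← intervalIntegral.integral_mul_const]
          congr 1 with u
          simp only [hHF, hsub, Function.comp_apply]
          ring
      _ = (∫ y in 0..A s, F (A s - y) * F y) * h s := by
          rw [integral_comp_mul_deriv (fun u _ => hA u) hc.continuousOn (by fun_prop)]
          simp [A]
  rw [hrhs]
  simp_rw [hHF]
  exact (hasDerivAt_egf_semicircleMoment (A s)).comp s (hA s)

/-- For the decoupled kernel `k(t,s) = h(t)h(s)`, the function
`H(s,t) = E[exp(S ∫_t^s h(u) du)]` (expectation over a semicircular `S`) solves the
Kraichnan equation with boundary condition `H(t,t) = 1`. -/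
theorem decoupled_kernel_solution (h : ℝ → ℝ) (hc : Continuous h) (hnn : ∀ u, 0 ≤ h u)
    (H : ℝ → ℝ → ℝ)
    (hH : ∀ s t, H s t = ∫ y : ℝ, Real.exp ((∫ u in t..s, h u) * y) * semicircleDensity y) :
    (∀ t, H t t = 1) ∧
    ∀ t s, 0 ≤ t → t ≤ s →
      HasDerivAt (fun r => H r t) (∫ u in t..s, H s u * H u t * (h s * h u)) s :=
  decoupled_kernel_solution_general h hc H hH
end

section
/- For the constant kernel k ≡ C > 0, the solution H of the Kraichnan equation satisfies lim_{x→∞} (1/x) log H(x) = 2√C, where H(x) := H(s,t) for s−t = x (the solution is stationary). -/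
/-!
`H(x)` is the moment generating function at `x` of `√C·S`, `S` semicircular. If `X ≤ b` a.e.
under a finite measure `μ`, then for `t ≥ 0` and `a < b`,
`μ{X ≥ a}·e^{ta} ≤ E[e^{tX}] ≤ μ(Ω)·e^{tb}` (the lower bound is Chernoff's), so
`(1/t) log E[e^{tX}] → b` as soon as every `{X ≥ a}` with `a < b` has positive mass.
For `√C·S` this `b` is `2√C`, the right end of the support.
-/

open MeasureTheory

open ProbabilityTheory Filter Topology Real Set

section ExponentialGrowthOfMGF

variable {Ω : Type*} [MeasurableSpace Ω] {μ : Measure Ω} [IsFiniteMeasure μ] {X : Ω → ℝ}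
  {b t : ℝ}

lemma cgf_le_of_ae_le (hμ : μ ≠ 0) (hX : AEMeasurable X μ) (hb : ∀ᵐ ω ∂μ, X ω ≤ b)
    (ht : 0 ≤ t) : cgf X μ t ≤ log (μ.real univ) + t * b := by
  have : NeZero μ := ⟨hμ⟩
  have hint := integrable_exp_mul_of_le t b ht hX hb
  have hmgf : mgf X μ t ≤ μ.real univ * exp (t * b) := by
    calc mgf X μ t ≤ ∫ _, exp (t * b) ∂μ :=
          integral_mono_ae hint (integrable_const _)
            (hb.mono fun ω h => exp_le_exp.2 (mul_le_mul_of_nonneg_left h ht))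
      _ = μ.real univ * exp (t * b) := by rw [integral_const, smul_eq_mul]
  calc cgf X μ t ≤ log (μ.real univ * exp (t * b)) := log_le_log (mgf_pos' hμ hint) hmgf
    _ = log (μ.real univ) + t * b := by
      rw [log_mul measureReal_univ_pos.ne' (exp_pos _).ne', log_exp]

lemma log_measureReal_add_le_cgf (hX : AEMeasurable X μ) (hb : ∀ᵐ ω ∂μ, X ω ≤ b)
    (ht : 0 ≤ t) {a : ℝ} (ha : μ {ω | a ≤ X ω} ≠ 0) :
    log (μ.real {ω | a ≤ X ω}) + t * a ≤ cgf X μ t := by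
  have hm : 0 < μ.real {ω | a ≤ X ω} := ENNReal.toReal_pos ha (measure_ne_top _ _)
  have hchernoff := measure_ge_le_exp_mul_mgf a ht (integrable_exp_mul_of_le t b ht hX hb)
  have hlower : μ.real {ω | a ≤ X ω} * exp (t * a) ≤ mgf X μ t := by
    calc μ.real {ω | a ≤ X ω} * exp (t * a) ≤ exp (-t * a) * mgf X μ t * exp (t * a) := by
          gcongr
      _ = mgf X μ t := by rw [mul_right_comm, ← exp_add, neg_mul, neg_add_cancel, exp_zero, one_mul]
  calc log (μ.real {ω | a ≤ X ω}) + t * a = log (μ.real {ω | a ≤ X ω} * exp (t * a)) := by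
        rw [log_mul hm.ne' (exp_pos _).ne', log_exp]
    _ ≤ cgf X μ t := log_le_log (by positivity) hlower

theorem tendsto_cgf_div_atTop (hX : AEMeasurable X μ) (hb : ∀ᵐ ω ∂μ, X ω ≤ b)
    (hpos : ∀ a < b, μ {ω | a ≤ X ω} ≠ 0) :
    Tendsto (fun t => cgf X μ t / t) atTop (𝓝 b) := by
  have const_add_div (c d : ℝ) : Tendsto (fun t : ℝ => c + d / t) atTop (𝓝 c) := by
    simpa using tendsto_const_nhds.add (tendsto_const_nhds.div_atTop (tendsto_id (α := ℝ)))
  refine tendsto_order.2 ⟨fun a ha => ?_, fun c hc => ?_⟩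
  · obtain ⟨a', haa', ha'b⟩ := exists_between ha
    filter_upwards [(const_add_div a' (log (μ.real {ω | a' ≤ X ω}))).eventually_const_lt haa',
      eventually_gt_atTop 0] with t hlt ht
    refine hlt.trans_le ?_
    rw [le_div_iff₀ ht, add_mul, div_mul_cancel₀ _ ht.ne']
    linarith [log_measureReal_add_le_cgf hX hb ht.le (hpos a' ha'b)]
  · have hμ : μ ≠ 0 := fun h => hpos (b - 1) (by linarith) (by simp [h])
    filter_upwards [(const_add_div b (log (μ.real univ))).eventually_lt_const hc,
      eventually_gt_atTop 0] with t hlt ht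
    refine lt_of_le_of_lt ?_ hlt
    rw [div_le_iff₀ ht, add_mul, div_mul_cancel₀ _ ht.ne']
    linarith [cgf_le_of_ae_le hμ hX hb ht.le]

end ExponentialGrowthOfMGF

section Semicircle

noncomputable def semicircleMeasure : Measure ℝ :=
  volume.withDensity fun y => ENNReal.ofReal (semicircleDensity y)

lemma semicircleDensity_nonneg (y : ℝ) : 0 ≤ semicircleDensity y :=
  indicator_nonneg (fun _ _ => by positivity) y

lemma semicircleDensity_pos_iff {y : ℝ} : 0 < semicircleDensity y ↔ y ∈ Ioo (-2) 2 := by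
  by_cases hy : y ∈ Icc (-2) 2
  · have hpos : 0 < 4 - y ^ 2 ↔ y ∈ Ioo (-2) 2 :=
      ⟨fun h => ⟨by nlinarith [hy.2], by nlinarith [hy.1]⟩, fun h => by nlinarith [h.1, h.2]⟩
    rw [semicircleDensity, indicator_of_mem hy, ← hpos, mul_pos_iff_of_pos_left (by positivity),
      sqrt_pos]
  · rw [semicircleDensity, indicator_of_notMem hy]
    exact iff_of_false (lt_irrefl 0) fun h => hy (Ioo_subset_Icc_self h)

lemma measurable_semicircleDensity : Measurable semicircleDensity :=
  (by fun_prop : Measurable fun y : ℝ => 1 / (2 * π) * √(4 - y ^ 2)).indicator measurableSet_Icc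

lemma integrable_semicircleDensity : Integrable semicircleDensity :=
  (by fun_prop : Continuous fun y : ℝ => 1 / (2 * π) * √(4 - y ^ 2)).integrableOn_Icc
    |>.integrable_indicator measurableSet_Icc

instance : IsFiniteMeasure semicircleMeasure :=
  isFiniteMeasure_withDensity_ofReal integrable_semicircleDensity.hasFiniteIntegral

lemma integral_semicircleMeasure (f : ℝ → ℝ) :
    ∫ y, f y ∂semicircleMeasure = ∫ y, f y * semicircleDensity y := by
  rw [semicircleMeasure, integral_withDensity_eq_integral_toReal_smul
    measurable_semicircleDensity.ennreal_ofReal (ae_of_all _ fun _ => ENNReal.ofReal_lt_top)]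
  simp_rw [ENNReal.toReal_ofReal (semicircleDensity_nonneg _), smul_eq_mul, mul_comm]

lemma semicircleMeasure_eq_zero_iff {s : Set ℝ} :
    semicircleMeasure s = 0 ↔ volume ({y | 0 < semicircleDensity y} ∩ s) = 0 := by
  simp [semicircleMeasure, withDensity_apply_eq_zero'
    measurable_semicircleDensity.ennreal_ofReal.aemeasurable]

lemma ae_le_two_semicircleMeasure : ∀ᵐ y ∂semicircleMeasure, y ≤ 2 := by
  rw [ae_iff, semicircleMeasure_eq_zero_iff]
  exact measure_mono_null (fun y ⟨hy, hy2⟩ => absurd (semicircleDensity_pos_iff.1 hy).2.le hy2)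
    measure_empty

lemma semicircleMeasure_Ici_ne_zero {a : ℝ} (ha : a < 2) : semicircleMeasure (Ici a) ≠ 0 := by
  rw [Ne, semicircleMeasure_eq_zero_iff]
  have hsub : Ioo (max a (-2)) 2 ⊆ {y | 0 < semicircleDensity y} ∩ Ici a := fun y hy =>
    ⟨semicircleDensity_pos_iff.2 ⟨(le_max_right _ _).trans_lt hy.1, hy.2⟩,
      (le_max_left _ _).trans hy.1.le⟩
  exact fun h => isOpen_Ioo.measure_ne_zero volume (nonempty_Ioo.2 (max_lt ha (by norm_num)))
    (measure_mono_null hsub h)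

end Semicircle

/-- For the constant kernel `k ≡ C > 0`, the stationary solution
`H(x) = E[exp(√C x S)]` of the Kraichnan equation has Lyapunov exponent
`lim_{x→∞} (1/x) log H(x) = 2√C`. -/
theorem const_kernel_lyapunov (C : ℝ) (hC : 0 < C) (H : ℝ → ℝ)
    (hH : ∀ x, H x = ∫ y : ℝ, Real.exp (Real.sqrt C * x * y) * semicircleDensity y) :
    Filter.Tendsto (fun x => Real.log (H x) / x) Filter.atTop
      (nhds (2 * Real.sqrt C)) := by
  have hsqrt : 0 < √C := sqrt_pos.2 hC
  have hmgf : H = mgf (fun y => √C * y) semicircleMeasure := by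
    funext x
    rw [hH, mgf, integral_semicircleMeasure]
    simp_rw [mul_left_comm x, mul_assoc]
  have hsupp : ∀ a < 2 * √C, semicircleMeasure {y | a ≤ √C * y} ≠ 0 := by
    intro a ha
    have hset : {y | a ≤ √C * y} = Ici (a / √C) := by
      ext y; simp [div_le_iff₀' hsqrt]
    rw [hset]
    exact semicircleMeasure_Ici_ne_zero (by rwa [div_lt_iff₀ hsqrt])
  rw [hmgf]
  exact tendsto_cgf_div_atTop (measurable_const_mul _).aemeasurable
    (ae_le_two_semicircleMeasure.mono fun y hy => by nlinarith) hsupp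
end

section
/- For the exponential generating function identity: Σ_{n≥0} C_n x^{2n}/(2n)! = (1/(2π)) ∫_{−2}^{2} e^{xy} √(4−y²) dy for all real x, where C_n is the n-th Catalan number. -/
/-!
Expand `exp (x y)` as a power series and integrate termwise (dominated convergence on the bounded
interval). The odd moments of the semicircle density vanish by symmetry, and the substitution
`y = 2 sin θ` turns the `2n`-th moment into the Wallis integral `4ⁿ⁺¹/(2n+2) ∫ sin²ⁿ`, which equals
`2π (2n choose n)/(n+1) = 2π Cₙ`.
-/

open MeasureTheory Real intervalIntegral Set Nat

lemma abs_le_max_abs_abs_of_mem_uIcc {a b t : ℝ} (ht : t ∈ uIcc a b) : |t| ≤ max |a| |b| := by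
  rcases le_total a b with h | h
  · rw [uIcc_of_le h] at ht; exact abs_le_max_abs_abs ht.1 ht.2
  · rw [uIcc_of_ge h] at ht; rw [max_comm]; exact abs_le_max_abs_abs ht.1 ht.2

theorem hasSum_intervalIntegral_exp_mul_mul {f : ℝ → ℝ} {a b : ℝ}
    (hf : IntervalIntegrable f volume a b) (x : ℝ) :
    HasSum (fun k : ℕ => x ^ k / k ! * ∫ y in a..b, y ^ k * f y)
      (∫ y in a..b, exp (x * y) * f y) := by
  set c := |x| * max |a| |b|
  have hterm (k : ℕ) : x ^ k / k ! * ∫ y in a..b, y ^ k * f y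
      = ∫ y in a..b, (x * y) ^ k / k ! * f y := by
    rw [← intervalIntegral.integral_const_mul]
    congr 1 with y
    ring
  have hbound (k : ℕ) (t : ℝ) (ht : t ∈ uIoc a b) :
      ‖(x * t) ^ k / k ! * f t‖ ≤ c ^ k / k ! * ‖f t‖ := by
    have hxt : |x * t| ≤ c := by
      rw [abs_mul]
      exact mul_le_mul_of_nonneg_left (abs_le_max_abs_abs_of_mem_uIcc (uIoc_subset_uIcc ht))
        (abs_nonneg x)
    rw [norm_mul, norm_div, norm_pow, Real.norm_eq_abs, Real.norm_natCast]
    gcongr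
  have hbound_tsum : (fun t => ∑' k : ℕ, c ^ k / k ! * ‖f t‖) = fun t => exp c * ‖f t‖ := by
    ext t
    rw [tsum_mul_right, exp_eq_exp_ℝ, NormedSpace.exp_eq_tsum_div]
  simp only [hterm]
  refine hasSum_integral_of_dominated_convergence (fun k t => c ^ k / k ! * ‖f t‖)
    (fun k => ((by fun_prop : Continuous fun y => (x * y) ^ k / k !).aestronglyMeasurable).mul
      hf.def'.aestronglyMeasurable) (fun k => ae_of_all _ (hbound k))
    (ae_of_all _ fun t _ => (summable_pow_div_factorial c).mul_right _)
    (hbound_tsum ▸ hf.norm.const_mul _) (ae_of_all _ fun t _ => ?_)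
  rw [exp_eq_exp_ℝ]
  exact (NormedSpace.expSeries_div_hasSum_exp (x * t)).mul_right _

lemma integral_sin_pow_add_two_neg_pi_div_two (k : ℕ) :
    ∫ θ in (-(π / 2))..(π / 2), sin θ ^ (k + 2)
      = (k + 1) / (k + 2) * ∫ θ in (-(π / 2))..(π / 2), sin θ ^ k := by
  simp [integral_sin_pow]

lemma integral_sin_pow_even_neg_pi_div_two (n : ℕ) :
    ∫ θ in (-(π / 2))..(π / 2), sin θ ^ (2 * n) = π * n.centralBinom / 4 ^ n := by
  induction n with
  | zero => simp
  | succ n ih =>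
    have hB : ((n + 1 : ℕ) : ℝ) * (n + 1).centralBinom = 2 * (2 * n + 1) * n.centralBinom := by
      exact_mod_cast succ_mul_centralBinom_succ n
    rw [mul_add_one, integral_sin_pow_add_two_neg_pi_div_two, ih]
    push_cast at hB ⊢
    field_simp
    rw [pow_succ]
    linear_combination (-2 * (4 : ℝ) ^ n) * hB

lemma integral_pow_mul_sqrt_four_sub_sq (k : ℕ) :
    ∫ y in (-2 : ℝ)..2, y ^ k * √(4 - y ^ 2)
      = 2 ^ (k + 2) / (k + 2) * ∫ θ in (-(π / 2))..(π / 2), sin θ ^ k := by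
  have hsub := integral_comp_mul_deriv (a := -(π / 2)) (b := π / 2) (f := fun θ => 2 * sin θ)
    (f' := fun θ => 2 * cos θ) (g := fun y => y ^ k * √(4 - y ^ 2))
    (fun θ _ => (hasDerivAt_sin θ).const_mul 2) (by fun_prop) (by fun_prop)
  simp only [Function.comp_def, sin_neg, sin_pi_div_two, mul_neg, mul_one] at hsub
  rw [← hsub]
  have hcongr : ∀ θ ∈ uIcc (-(π / 2)) (π / 2),
      (2 * sin θ) ^ k * √(4 - (2 * sin θ) ^ 2) * (2 * cos θ)
        = 2 ^ (k + 2) * (sin θ ^ k - sin θ ^ (k + 2)) := by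
    intro θ hθ
    rw [uIcc_of_le (by linarith [pi_pos])] at hθ
    have hsqrt : √(4 - (2 * sin θ) ^ 2) = 2 * cos θ := by
      rw [← sqrt_sq (mul_nonneg zero_le_two (cos_nonneg_of_mem_Icc hθ))]
      congr 1
      linear_combination (-4) * sin_sq_add_cos_sq θ
    rw [hsqrt]
    linear_combination (2 : ℝ) ^ (k + 2) * sin θ ^ k * sin_sq_add_cos_sq θ
  rw [integral_congr hcongr, intervalIntegral.integral_const_mul,
    intervalIntegral.integral_sub (by apply Continuous.intervalIntegrable; fun_prop)
      (by apply Continuous.intervalIntegrable; fun_prop),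
    integral_sin_pow_add_two_neg_pi_div_two]
  field_simp
  ring

lemma integral_pow_even_mul_sqrt_four_sub_sq (n : ℕ) :
    ∫ y in (-2 : ℝ)..2, y ^ (2 * n) * √(4 - y ^ 2) = 2 * π * catalan n := by
  have hC : ((n + 1 : ℕ) : ℝ) * catalan n = n.centralBinom := by
    exact_mod_cast succ_mul_catalan_eq_centralBinom n
  rw [integral_pow_mul_sqrt_four_sub_sq, integral_sin_pow_even_neg_pi_div_two, pow_add, pow_mul,
    ← hC]
  push_cast
  field_simp
  ring

lemma Function.Odd.intervalIntegral_eq_zero {E : Type*} [NormedAddCommGroup E]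
    [NormedSpace ℝ E] {f : ℝ → E} (hf : f.Odd) (a : ℝ) : ∫ y in -a..a, f y = 0 := by
  have h := integral_comp_neg (a := -a) (b := a) f
  have hf' : ∀ y, f (-y) = -f y := hf
  simp only [hf', intervalIntegral.integral_neg, neg_neg] at h
  have h2 : (2 : ℝ) • ∫ y in -a..a, f y = 0 := by
    rw [two_smul]
    nth_rewrite 1 [← h]
    exact neg_add_cancel _
  exact (smul_eq_zero.mp h2).resolve_left two_ne_zero

lemma integral_pow_odd_mul_sqrt_four_sub_sq (n : ℕ) :
    ∫ y in (-2 : ℝ)..2, y ^ (2 * n + 1) * √(4 - y ^ 2) = 0 := by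
  refine Function.Odd.intervalIntegral_eq_zero (fun y => ?_) 2
  rw [(odd_two_mul_add_one n).neg_pow, neg_sq, neg_mul]

/-- Exponential generating function identity:
`Σ_{n≥0} C_n x^{2n}/(2n)! = (1/(2π)) ∫_{−2}^{2} e^{xy} √(4−y²) dy` for all real `x`. -/
theorem catalan_egf_eq_semicircle_mgf (x : ℝ) :
    ∑' n : ℕ, (catalan n : ℝ) * x ^ (2 * n) / (2 * n).factorial
      = (1 / (2 * Real.pi)) * ∫ y in (-2:ℝ)..2,
          Real.exp (x * y) * Real.sqrt (4 - y ^ 2) := by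
  have hmgf := hasSum_intervalIntegral_exp_mul_mul (f := fun y => √(4 - y ^ 2))
    (a := -2) (b := 2) (by apply Continuous.intervalIntegrable; fun_prop) x
  have hodd : ∀ k ∉ range (2 * ·),
      x ^ k / k ! * ∫ y in (-2 : ℝ)..2, y ^ k * √(4 - y ^ 2) = 0 := by
    intro k hk
    obtain ⟨n, rfl⟩ : Odd k := not_even_iff_odd.mp fun ⟨n, hn⟩ => hk ⟨n, by dsimp only; omega⟩
    rw [integral_pow_odd_mul_sqrt_four_sub_sq, mul_zero]
  have hmgf_even := ((mul_right_injective₀ two_ne_zero).hasSum_iff hodd).mpr hmgf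
  rw [← (hmgf_even.mul_left (1 / (2 * π))).tsum_eq]
  congr 1 with n
  simp only [Function.comp_apply, integral_pow_even_mul_sqrt_four_sub_sq]
  field_simp
end

section
/- If κ(u) = c e^{−δu} with c, δ > 0, then for all λ strictly greater than the abscissa of convergence λ_c of Ĥ, the Laplace transform satisfies Ĥ(λ) = 1/(λ − c Ĥ(λ+δ)). -/
open MeasureTheory Set Filter Topology

/-!
Multiply the equation by `e^{-λx}` and integrate over `(0, ∞)`. The right-hand side is the
one-sided convolution of `H` with `u ↦ c e^{-δu} H(u)`, so its Laplace transform at `λ` is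
`Ĥ(λ) · c Ĥ(λ + δ)`. The left-hand side is `λ Ĥ(λ) - H(0) = λ Ĥ(λ) - 1` by integration by parts;
the boundary term at infinity vanishes because `H' ≥ 0` makes `H` nondecreasing, and a
nondecreasing function whose Laplace transform converges at `μ` is `O(e^{μx})`.
-/

/-- This is `0` when the integral does not converge. -/
noncomputable def laplaceTransform (f : ℝ → ℝ) (s : ℝ) : ℝ :=
  ∫ u in Ioi 0, Real.exp (-s * u) * f u

theorem integrableOn_exp_mul_of_le {f : ℝ → ℝ} {a s : ℝ}
    (hf : IntegrableOn (fun u => Real.exp (-a * u) * f u) (Ioi 0)) (has : a ≤ s) :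
    IntegrableOn (fun u => Real.exp (-s * u) * f u) (Ioi 0) := by
  have hfactor : (fun u => Real.exp (-s * u) * f u)
      = fun u => Real.exp (-(s - a) * u) * (Real.exp (-a * u) * f u) := by
    ext u
    rw [← mul_assoc, ← Real.exp_add]
    ring_nf
  rw [hfactor]
  refine hf.bdd_mul (c := 1) (by fun_prop : Continuous _).aestronglyMeasurable ?_
  filter_upwards [ae_restrict_mem measurableSet_Ioi] with u hu
  rw [Real.norm_of_nonneg (Real.exp_pos _).le, Real.exp_le_one_iff]
  nlinarith [mem_Ioi.1 hu]

section Monotone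

variable {f : ℝ → ℝ} {a : ℝ}

theorem exp_mul_le_of_monotoneOn (hmono : MonotoneOn f (Ici 0)) (hf0 : 0 ≤ f 0)
    (hf : IntegrableOn (fun u => Real.exp (-a * u) * f u) (Ioi 0)) {x : ℝ} (hx : 0 ≤ x) :
    Real.exp (-a * x) * f x ≤ Real.exp |a| * laplaceTransform f a := by
  have hnonneg : ∀ u, 0 ≤ u → 0 ≤ f u := fun u hu => hf0.trans (hmono self_mem_Ici hu hu)
  have hsub : Ioc x (x + 1) ⊆ Ioi 0 := fun u hu => hx.trans_lt hu.1
  have hexp : ∀ u ∈ Ioc x (x + 1), Real.exp (-a * x - |a|) ≤ Real.exp (-a * u) := by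
    intro u hu
    refine Real.exp_le_exp.2 ?_
    nlinarith [mul_nonneg (sub_nonneg.2 (le_abs_self a)) (sub_nonneg.2 hu.1.le),
      mul_nonneg (abs_nonneg a) (by linarith [hu.2] : 0 ≤ x + 1 - u)]
  have hlower : Real.exp (-a * x - |a|) * f x ≤ ∫ u in Ioc x (x + 1), Real.exp (-a * u) * f u :=
    calc Real.exp (-a * x - |a|) * f x
        = ∫ _ in Ioc x (x + 1), Real.exp (-a * x - |a|) * f x := by simp
      _ ≤ _ := setIntegral_mono_on (integrableOn_const measure_Ioc_lt_top.ne)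
          (hf.mono_set hsub) measurableSet_Ioc fun u hu =>
            mul_le_mul (hexp u hu) (hmono hx (hx.trans hu.1.le) hu.1.le) (hnonneg x hx)
              (Real.exp_pos _).le
  have hupper : ∫ u in Ioc x (x + 1), Real.exp (-a * u) * f u ≤ laplaceTransform f a := by
    refine setIntegral_mono_set hf ?_ hsub.eventuallyLE
    filter_upwards [ae_restrict_mem measurableSet_Ioi] with u hu
    exact mul_nonneg (Real.exp_pos _).le (hnonneg u (le_of_lt hu))
  calc Real.exp (-a * x) * f x = Real.exp |a| * (Real.exp (-a * x - |a|) * f x) := by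
        rw [← mul_assoc, ← Real.exp_add]
        ring_nf
    _ ≤ _ := mul_le_mul_of_nonneg_left (hlower.trans hupper) (Real.exp_pos _).le

theorem tendsto_exp_mul_of_monotoneOn (hmono : MonotoneOn f (Ici 0)) (hf0 : 0 ≤ f 0)
    (hf : IntegrableOn (fun u => Real.exp (-a * u) * f u) (Ioi 0)) {s : ℝ} (has : a < s) :
    Tendsto (fun x => Real.exp (-s * x) * f x) atTop (𝓝 0) := by
  have hdecay : Tendsto (fun x => Real.exp (-((s - a) * x)) * (Real.exp |a| * laplaceTransform f a))
      atTop (𝓝 0) := by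
    simpa using (Real.tendsto_exp_neg_atTop_nhds_zero.comp
      (tendsto_id.const_mul_atTop (sub_pos.2 has))).mul_const _
  refine squeeze_zero' ?_ ?_ hdecay
  · filter_upwards [eventually_ge_atTop 0] with x hx
    exact mul_nonneg (Real.exp_pos _).le (hf0.trans (hmono self_mem_Ici hx hx))
  · filter_upwards [eventually_ge_atTop 0] with x hx
    calc Real.exp (-s * x) * f x = Real.exp (-((s - a) * x)) * (Real.exp (-a * x) * f x) := by
          rw [← mul_assoc, ← Real.exp_add]
          ring_nf
      _ ≤ _ := mul_le_mul_of_nonneg_left (exp_mul_le_of_monotoneOn hmono hf0 hf hx)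
          (Real.exp_pos _).le

end Monotone

theorem exp_mul_intervalIntegral_mul_sub (f g : ℝ → ℝ) (s x : ℝ) :
    Real.exp (-s * x) * ∫ t in 0..x, f t * g (x - t)
      = ∫ t in 0..x, (Real.exp (-s * t) * f t) * (Real.exp (-s * (x - t)) * g (x - t)) := by
  rw [← intervalIntegral.integral_const_mul]
  refine intervalIntegral.integral_congr fun t _ => ?_
  have hsplit : Real.exp (-s * x) = Real.exp (-s * t) * Real.exp (-s * (x - t)) := by
    rw [← Real.exp_add]
    ring_nf
  simp only [hsplit]
  ring

section Convolution

variable {f g : ℝ → ℝ} {s : ℝ}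

theorem integrableOn_exp_mul_intervalIntegral_mul_sub
    (hf : IntegrableOn (fun u => Real.exp (-s * u) * f u) (Ioi 0))
    (hg : IntegrableOn (fun u => Real.exp (-s * u) * g u) (Ioi 0)) :
    IntegrableOn (fun x => Real.exp (-s * x) * ∫ t in 0..x, f t * g (x - t)) (Ioi 0) := by
  have h := integrable_posConvolution hf hg (ContinuousLinearMap.mul ℝ ℝ)
  rw [posConvolution, integrable_indicator_iff measurableSet_Ioi] at h
  simp only [ContinuousLinearMap.mul_apply'] at h
  simpa only [exp_mul_intervalIntegral_mul_sub] using h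

theorem laplaceTransform_intervalIntegral_mul_sub
    (hf : IntegrableOn (fun u => Real.exp (-s * u) * f u) (Ioi 0))
    (hg : IntegrableOn (fun u => Real.exp (-s * u) * g u) (Ioi 0)) :
    laplaceTransform (fun x => ∫ t in 0..x, f t * g (x - t)) s
      = laplaceTransform f s * laplaceTransform g s := by
  have h := integral_posConvolution hf hg (ContinuousLinearMap.mul ℝ ℝ)
  simp only [ContinuousLinearMap.mul_apply'] at h
  simpa only [laplaceTransform, exp_mul_intervalIntegral_mul_sub] using h

end Convolution

theorem laplaceTransform_of_hasDerivAt {f f' : ℝ → ℝ} {s : ℝ}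
    (hderiv : ∀ x ∈ Ici 0, HasDerivAt f (f' x) x)
    (hf : IntegrableOn (fun u => Real.exp (-s * u) * f u) (Ioi 0))
    (hf' : IntegrableOn (fun u => Real.exp (-s * u) * f' u) (Ioi 0))
    (hlim : Tendsto (fun x => Real.exp (-s * x) * f x) atTop (𝓝 0)) :
    laplaceTransform f' s = s * laplaceTransform f s - f 0 := by
  have hprod : ∀ x ∈ Ici 0, HasDerivAt (fun y => Real.exp (-s * y) * f y)
      (Real.exp (-s * x) * f' x + -s * (Real.exp (-s * x) * f x)) x := fun x hx => by
    have hexp : HasDerivAt (fun y => Real.exp (-s * y)) (Real.exp (-s * x) * (-s * 1)) x :=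
      ((hasDerivAt_id x).const_mul (-s)).exp
    exact (hexp.mul (hderiv x hx)).congr_deriv (by ring)
  have h := integral_Ioi_of_hasDerivAt_of_tendsto' hprod (hf'.add (hf.const_mul (-s))) hlim
  rw [integral_add hf' (hf.const_mul (-s)), integral_const_mul] at h
  simp only [mul_zero, Real.exp_zero, one_mul] at h
  unfold laplaceTransform
  linarith

theorem laplace_exponential_kernel_general (c δ : ℝ) (hc : 0 < c) (hδ : 0 < δ)
    (H : ℝ → ℝ) (hHnn : ∀ u, 0 ≤ H u) (hH0 : H 0 = 1)
    (hode : ∀ x ≥ (0:ℝ),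
      HasDerivAt H
        (∫ u in (0:ℝ)..x, H (x - u) * H u * (c * Real.exp (-δ * (x - u)))) x)
    (l μ : ℝ) (hμl : μ < l)
    (hint : IntegrableOn (fun u => Real.exp (-μ * u) * H u) (Set.Ioi 0)) :
    (∫ u in Set.Ioi (0:ℝ), Real.exp (-l * u) * H u)
      = 1 / (l - c * ∫ u in Set.Ioi (0:ℝ), Real.exp (-(l + δ) * u) * H u) := by
  set g : ℝ → ℝ := fun v => c * (Real.exp (-δ * v) * H v)
  have hHl := integrableOn_exp_mul_of_le hint hμl.le
  have hexp_g : ∀ u, Real.exp (-l * u) * g u = c * (Real.exp (-(l + δ) * u) * H u) := fun u => by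
    simp only [g, neg_add, add_mul, Real.exp_add]
    ring
  have hg : IntegrableOn (fun u => Real.exp (-l * u) * g u) (Ioi 0) := by
    have hc_int : IntegrableOn (fun u => c * (Real.exp (-(l + δ) * u) * H u)) (Ioi 0) :=
      (integrableOn_exp_mul_of_le hint (by linarith)).const_mul c
    exact hc_int.congr_fun (fun u _ => (hexp_g u).symm) measurableSet_Ioi
  have hLg : laplaceTransform g l = c * laplaceTransform H (l + δ) := by
    simp only [laplaceTransform, hexp_g, integral_const_mul]
  replace hode : ∀ x ∈ Ici 0, HasDerivAt H (∫ t in 0..x, H t * g (x - t)) x := fun x hx => by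
    convert hode x hx using 1
    exact intervalIntegral.integral_congr fun t _ => by simp only [g]; ring
  have hmono : MonotoneOn H (Ici 0) :=
    monotoneOn_of_hasDerivWithinAt_nonneg (convex_Ici 0)
      (fun x hx => (hode x hx).continuousAt.continuousWithinAt)
      (fun x hx => (hode x (interior_subset hx)).hasDerivWithinAt)
      fun x hx => intervalIntegral.integral_nonneg (interior_subset hx) fun t _ =>
        mul_nonneg (hHnn t) (mul_nonneg hc.le (mul_nonneg (Real.exp_pos _).le (hHnn _)))
  have hconv := laplaceTransform_intervalIntegral_mul_sub hHl hg
  have hparts := laplaceTransform_of_hasDerivAt hode hHl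
    (integrableOn_exp_mul_intervalIntegral_mul_sub hHl hg)
    (tendsto_exp_mul_of_monotoneOn hmono (hH0 ▸ zero_le_one) hint hμl)
  rw [hLg] at hconv
  rw [hH0] at hparts
  change laplaceTransform H l = 1 / (l - c * laplaceTransform H (l + δ))
  exact eq_one_div_of_mul_eq_one_right (by linear_combination hparts.symm.trans hconv)

/-- For the exponential kernel `κ(u) = c e^{−δu}`, the Laplace transform of the solution
of the Kraichnan equation satisfies `Ĥ(λ) = 1/(λ − c Ĥ(λ+δ))` for all `λ` strictly above
the abscissa of convergence. -/
theorem laplace_exponential_kernel (c δ : ℝ) (hc : 0 < c) (hδ : 0 < δ)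
    (H : ℝ → ℝ) (hHc : Continuous H) (hHnn : ∀ u, 0 ≤ H u) (hH0 : H 0 = 1)
    (hode : ∀ x ≥ (0:ℝ),
      HasDerivAt H
        (∫ u in (0:ℝ)..x, H (x - u) * H u * (c * Real.exp (-δ * (x - u)))) x)
    (l μ : ℝ) (hμl : μ < l)
    (hint : IntegrableOn (fun u => Real.exp (-μ * u) * H u) (Set.Ioi 0)) :
    (∫ u in Set.Ioi (0:ℝ), Real.exp (-l * u) * H u)
      = 1 / (l - c * ∫ u in Set.Ioi (0:ℝ), Real.exp (-(l + δ) * u) * H u) :=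
  laplace_exponential_kernel_general c δ hc hδ H hHnn hH0 hode l μ hμl hint
end

section
/- Uniqueness of zeros on the critical line: if G : ℝ≥0 → ℝ≥0 is measurable, not almost everywhere zero, with ∫_0^∞ e^{−λ_c u} G(u) du < ∞, and z ∈ ℂ with Re(z) = λ_c satisfies ∫_0^∞ e^{−zu}G(u)du − z = ∫_0^∞ e^{−λ_c u}G(u)du − λ_c, then Im(z) = 0. -/
open MeasureTheory

/-! Write `b = Im z`. Taking real parts of the equation gives
`∫₀^∞ e^{-λ_c u} G(u) (1 - cos (b u)) du = 0` with a nonnegative integrand, so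
`e^{-λ_c u} G(u) (1 - cos (b u)) = 0` for a.e. `u > 0`. If `b ≠ 0`, then `cos (b u) = 1` only on
the countable set `(2π/b) ℤ`, hence `G = 0` a.e. on `(0, ∞)`. -/

theorem ae_cos_mul_ne_one {μ : Measure ℝ} [NullSingletonClass μ] {b : ℝ} (hb : b ≠ 0) :
    ∀ᵐ u ∂μ, Real.cos (b * u) ≠ 1 := by
  have hsub : {u : ℝ | Real.cos (b * u) = 1} ⊆ Set.range (fun n : ℤ => n * (2 * Real.pi) / b) := by
    intro u hu
    obtain ⟨n, hn⟩ := (Real.cos_eq_one_iff _).mp hu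
    exact ⟨n, by field_simp; linarith⟩
  filter_upwards [((Set.countable_range _).mono hsub).ae_notMem μ] with u hu using hu

theorem ae_eq_zero_of_integral_mul_cos_eq {μ : Measure ℝ} [NullSingletonClass μ] {w : ℝ → ℝ}
    {b : ℝ} (hb : b ≠ 0) (hw : 0 ≤ᵐ[μ] w) (hwi : Integrable w μ)
    (h : ∫ u, w u * Real.cos (b * u) ∂μ = ∫ u, w u ∂μ) : w =ᵐ[μ] 0 := by
  have hcos_int : Integrable (fun u => w u * Real.cos (b * u)) μ :=
    hwi.mul_bdd (by fun_prop) (.of_forall fun u => by simpa using Real.abs_cos_le_one (b * u))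
  have hdiff_int : Integrable (fun u => w u * (1 - Real.cos (b * u))) μ := by
    simpa only [mul_sub, mul_one, Pi.sub_def] using hwi.sub hcos_int
  have hnn : 0 ≤ᵐ[μ] fun u => w u * (1 - Real.cos (b * u)) := by
    filter_upwards [hw] with u hu using mul_nonneg hu (by linarith [Real.cos_le_one (b * u)])
  have hzero : ∫ u, w u * (1 - Real.cos (b * u)) ∂μ = 0 := by
    simp only [mul_sub, mul_one]
    rw [integral_sub hwi hcos_int, h, sub_self]
  filter_upwards [(integral_eq_zero_iff_of_nonneg_ae hnn hdiff_int).mp hzero,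
    ae_cos_mul_ne_one hb] with u hu hcos
  exact (mul_eq_zero.mp hu).resolve_right (sub_ne_zero.mpr hcos.symm)

theorem integrable_cexp_neg_mul_of_integrable {μ : Measure ℝ} {w : ℝ → ℝ} {z : ℂ}
    (h : Integrable (fun u => Real.exp (-z.re * u) * w u) μ) :
    Integrable (fun u : ℝ => Complex.exp (-z * u) * w u) μ := by
  have hsplit : ∀ u : ℝ, Complex.exp (-z * u) * w u
      = Complex.exp ((-(z.im * u) : ℝ) * Complex.I) * ((Real.exp (-z.re * u) * w u : ℝ) : ℂ) := by
    intro u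
    conv_lhs => rw [← Complex.re_add_im z]
    push_cast
    rw [← mul_assoc, ← Complex.exp_add]
    ring_nf
  simp_rw [hsplit]
  exact h.ofReal.bdd_mul (c := 1) (by fun_prop)
    (.of_forall fun u => (Complex.norm_exp_ofReal_mul_I _).le)

theorem re_integral_cexp_neg_mul {μ : Measure ℝ} {w : ℝ → ℝ} {z : ℂ}
    (h : Integrable (fun u => Real.exp (-z.re * u) * w u) μ) :
    (∫ u, Complex.exp (-z * u) * w u ∂μ).re
      = ∫ u, Real.exp (-z.re * u) * w u * Real.cos (z.im * u) ∂μ := by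
  have := integral_re (integrable_cexp_neg_mul_of_integrable h)
  simp only [RCLike.re_to_complex] at this
  rw [← this]
  congr 1 with u
  simp [Complex.exp_re, Real.cos_neg]
  ring

theorem critical_line_zero_unique_general (G : ℝ → ℝ)
    (hGnn : ∀ u, 0 ≤ G u)
    (hne : ¬ (∀ᵐ u ∂(volume.restrict (Set.Ioi (0:ℝ))), G u = 0))
    (lc : ℝ)
    (hint : IntegrableOn (fun u => Real.exp (-lc * u) * G u) (Set.Ioi 0))
    (z : ℂ) (hz : z.re = lc)
    (heq : (∫ u in Set.Ioi (0:ℝ), Complex.exp (-z * u) * (G u : ℂ)) - z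
      = ((∫ u in Set.Ioi (0:ℝ), Real.exp (-lc * u) * G u : ℝ) : ℂ) - (lc : ℂ)) :
    z.im = 0 := by
  subst hz
  by_contra hb
  have hre : ∫ u in Set.Ioi (0:ℝ), Real.exp (-z.re * u) * G u * Real.cos (z.im * u)
      = ∫ u in Set.Ioi (0:ℝ), Real.exp (-z.re * u) * G u := by
    rw [← re_integral_cexp_neg_mul hint]
    simpa using congrArg Complex.re heq
  have hw : (fun u => Real.exp (-z.re * u) * G u) =ᵐ[volume.restrict (Set.Ioi 0)] 0 :=
    ae_eq_zero_of_integral_mul_cos_eq hb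
      (.of_forall fun u => mul_nonneg (Real.exp_pos _).le (hGnn u)) hint hre
  refine hne ?_
  filter_upwards [hw] with u hu
  exact (mul_eq_zero.mp hu).resolve_left (Real.exp_pos _).ne'

/-- Uniqueness of zeros on the critical line: if `G ≥ 0` is measurable, not a.e. zero on
`(0,∞)`, with `∫_0^∞ e^{−λ_c u} G(u) du < ∞`, and `z` with `Re z = λ_c` satisfies
`∫_0^∞ e^{−zu} G(u) du − z = ∫_0^∞ e^{−λ_c u} G(u) du − λ_c`, then `Im z = 0`. -/
theorem critical_line_zero_unique (G : ℝ → ℝ) (hGm : Measurable G)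
    (hGnn : ∀ u, 0 ≤ G u)
    (hne : ¬ (∀ᵐ u ∂(volume.restrict (Set.Ioi (0:ℝ))), G u = 0))
    (lc : ℝ)
    (hint : IntegrableOn (fun u => Real.exp (-lc * u) * G u) (Set.Ioi 0))
    (z : ℂ) (hz : z.re = lc)
    (heq : (∫ u in Set.Ioi (0:ℝ), Complex.exp (-z * u) * (G u : ℂ)) - z
      = ((∫ u in Set.Ioi (0:ℝ), Real.exp (-lc * u) * G u : ℝ) : ℂ) - (lc : ℂ)) :
    z.im = 0 :=
  critical_line_zero_unique_general G hGnn hne lc hint z hz heq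
end
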